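/- arXiv:2510.12706 — 3 statements merged into one kernel-verified Lean document; each statement's English description precedes it below -/
import Mathlib

section
/- With the twisted GKLO operators as in the context: suppose i and i+1 both lie in I, let 1 ≤ k, l ≤ m_i with k ≠ l, and let 1 ≤ p ≤ m_{i+1}. Then, writing [A,B] = A∘B − B∘A, the following identity of ℂ-linear endomorphisms of F holds: [κ'_{i,k}, [κ_{i,l}, κ_{i+1,p}]] = M( −ℏ²(γ_{i,k} − γ_{i,l} + 2γ_{i+1,p} + ℏ) / ((γ_{i+1,p} − γ_{i,l} + ½ℏ)(γ_{i,l} + γ_{i,k})(γ_{i+1,p} + γ_{i,k} + (3/2)ℏ)) ) ∘ κ'_{i,k} ∘ κ_{i,l} ∘ κ_{i+1,p}. -/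
/- Twisted GKLO representation setup (type AI).
   Indices: `i ∈ I = {1,…,n−1}`, `1 ≤ k ≤ m i`, with conventions `m 0 = m n = 0`
   (and `lam 0 = lam n = 0`), so that the indeterminates are exactly
   `ℏ`, `γ_{i,k}` (`i ∈ I`, `1 ≤ k ≤ m i`), `r_{i,t}` (`i ∈ I`, `1 ≤ t ≤ lam i`). -/

noncomputable section

/-- The indexing type of the indeterminates: `ℏ`, the `γ_{i,k}` and the `r_{i,t}`. -/
abbrev GVar (n : ℕ) (m lam : ℕ → ℕ) : Type :=
  Unit ⊕ ((Σ i : Fin (n + 1), Fin (m i)) ⊕ (Σ i : Fin (n + 1), Fin (lam i)))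

/-- `F`, the fraction field of the polynomial ring over `ℂ` in the indeterminates. -/
abbrev GF (n : ℕ) (m lam : ℕ → ℕ) : Type :=
  FractionRing (MvPolynomial (GVar n m lam) ℂ)

/-- The indeterminate `ℏ`. -/
def hb (n : ℕ) (m lam : ℕ → ℕ) : GF n m lam :=
  algebraMap (MvPolynomial (GVar n m lam) ℂ) (GF n m lam) (MvPolynomial.X (Sum.inl ()))

/-- The indeterminate `γ_{i,k}` (for `1 ≤ k ≤ m i`, `i ≤ n`; junk value `0` otherwise). -/
def gam (n : ℕ) (m lam : ℕ → ℕ) (i k : ℕ) : GF n m lam :=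
  if h : i < n + 1 ∧ k - 1 < m i then
    algebraMap (MvPolynomial (GVar n m lam) ℂ) (GF n m lam)
      (MvPolynomial.X (Sum.inr (Sum.inl ⟨⟨i, h.1⟩, ⟨k - 1, h.2⟩⟩)))
  else 0

/-- The indeterminate `r_{i,t}` (for `1 ≤ t ≤ lam i`, `i ≤ n`; junk value `0` otherwise). -/
def rv (n : ℕ) (m lam : ℕ → ℕ) (i t : ℕ) : GF n m lam :=
  if h : i < n + 1 ∧ t - 1 < lam i then
    algebraMap (MvPolynomial (GVar n m lam) ℂ) (GF n m lam)
      (MvPolynomial.X (Sum.inr (Sum.inr ⟨⟨i, h.1⟩, ⟨t - 1, h.2⟩⟩)))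
  else 0

/-- `ξ_{i,k} = γ_{i,k} + ℏ`. -/
def xi (n : ℕ) (m lam : ℕ → ℕ) (i k : ℕ) : GF n m lam :=
  gam n m lam i k + hb n m lam

/-- `R_i(x) = ∏_{t=1}^{λ_i} (x² − r_{i,t}²)`. -/
def RR (n : ℕ) (m lam : ℕ → ℕ) (i : ℕ) (x : GF n m lam) : GF n m lam :=
  ∏ t ∈ Finset.Icc 1 (lam i), (x ^ 2 - rv n m lam i t ^ 2)

/-- The coefficient `c_{i,k}` of the twisted GKLO operator `κ_{i,k}`. -/
def cc (n : ℕ) (m lam : ℕ → ℕ) (i k : ℕ) : GF n m lam :=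
  ((∏ l ∈ Finset.Icc 1 (m (i + 1)),
      (gam n m lam i k ^ 2 - (gam n m lam (i + 1) l + hb n m lam / 2) ^ 2)) *
    ∏ l ∈ Finset.Icc 1 (m (i - 1)),
      (gam n m lam i k + gam n m lam (i - 1) l + hb n m lam / 2)) /
  (2 * (gam n m lam i k - hb n m lam / 2) *
    ∏ l ∈ (Finset.Icc 1 (m i)).erase k, (gam n m lam i k ^ 2 - gam n m lam i l ^ 2))

/-- The coefficient `c'_{i,k}` of the twisted GKLO operator `κ'_{i,k}`. -/
def cc' (n : ℕ) (m lam : ℕ → ℕ) (i k : ℕ) : GF n m lam :=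
  (RR n m lam i (xi n m lam i k) *
    ∏ l ∈ Finset.Icc 1 (m (i - 1)),
      (xi n m lam i k - gam n m lam (i - 1) l - hb n m lam / 2)) /
  (2 * (gam n m lam i k + 3 * hb n m lam / 2) *
    ∏ l ∈ (Finset.Icc 1 (m i)).erase k, (xi n m lam i k ^ 2 - xi n m lam i l ^ 2))

/-- `M(f)`, the multiplication operator `x ↦ f·x`, as a `ℂ`-linear endomorphism of `F`. -/
def Mop (n : ℕ) (m lam : ℕ → ℕ) (f : GF n m lam) : Module.End ℂ (GF n m lam) :=
  LinearMap.mulLeft ℂ f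

/-- `κ_{i,k} = M(c_{i,k}) ∘ σ⁻_{i,k}`, where `σ` is the family of automorphisms `σ⁻`. -/
def kap (n : ℕ) (m lam : ℕ → ℕ) (σ : ℕ → ℕ → (GF n m lam ≃ₐ[ℂ] GF n m lam))
    (i k : ℕ) : Module.End ℂ (GF n m lam) :=
  Mop n m lam (cc n m lam i k) * (σ i k).toLinearMap

/-- `κ'_{i,k} = M(c'_{i,k}) ∘ σ⁺_{i,k}`, where `σ` is the family of automorphisms `σ⁺`. -/
def kap' (n : ℕ) (m lam : ℕ → ℕ) (σ : ℕ → ℕ → (GF n m lam ≃ₐ[ℂ] GF n m lam))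
    (i k : ℕ) : Module.End ℂ (GF n m lam) :=
  Mop n m lam (cc' n m lam i k) * (σ i k).toLinearMap

/-- The Cartan matrix of `sl_n`: `a_{ii} = 2`, `a_{ij} = −1` if `|i−j|=1`, else `0`. -/
def cartan (i j : ℕ) : ℤ :=
  if i = j then 2 else if i + 1 = j ∨ j + 1 = i then -1 else 0


/-! The operators are weighted shifts `M(f) ∘ σ`, and `σ⁺_{i,k}`, `σ⁻_{i,l}`, `σ⁻_{i+1,p}` commute
because they move three distinct variables. A product of weighted shifts is again one, so all four
terms of the double commutator are weighted shifts along the same automorphism and the identity is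
one between weights. Each of the shifts rescales a coefficient by the ratio of the single factor
it changes: `σ⁺_{i,k}` rescales `c_{i,l}` by `ρ₁` and `c_{i+1,p}` by `ρ₂`, `σ⁻_{i,l}` rescales
`c_{i+1,p}` by `ρ₃` and `c'_{i,k}` by `ρ₅`, `σ⁻_{i+1,p}` rescales `c_{i,l}` by `ρ₄`, and nothing
else moves. The weight of the double commutator is then that of `κ'_{i,k} κ_{i,l} κ_{i+1,p}` times
`(ρ₁ρ₂ − ρ₅)(ρ₃ − ρ₄) / (ρ₁ρ₂ρ₃)`, a rational function of `γ_{i,k}, γ_{i,l}, γ_{i+1,p}, ℏ`; its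
denominators do not vanish because these four are linearly independent. -/

theorem map_prod_eq_self {ι K F : Type*} [CommMonoid K] [FunLike F K K] [MonoidHomClass F K K]
    (σ : F) {s : Finset ι} {f : ι → K} (h : ∀ x ∈ s, σ (f x) = f x) :
    σ (∏ x ∈ s, f x) = ∏ x ∈ s, f x :=
  (map_prod σ f s).trans (Finset.prod_congr rfl h)

theorem map_prod_eq_mul_div {ι K F : Type*} [Field K] [FunLike F K K]
    [MonoidWithZeroHomClass F K K] [DecidableEq ι] (σ : F) {s : Finset ι} {f : ι → K} {j : ι}
    (hj : j ∈ s) (h : ∀ x ∈ s, x ≠ j → σ (f x) = f x) :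
    σ (∏ x ∈ s, f x) = (∏ x ∈ s, f x) * (σ (f j) / f j) := by
  rw [← Finset.mul_prod_erase s f hj, map_mul,
    map_prod_eq_self σ fun x hx => h x (Finset.mem_of_mem_erase hx) (Finset.ne_of_mem_erase hx)]
  rcases eq_or_ne (f j) 0 with hfj | hfj
  · simp [hfj]
  · field_simp

theorem div_mul_mul_div {K : Type*} [Field K] (a b c u v : K) :
    a / (b * (c * (v / u))) = a / (b * c) * (u / v) := by
  simp only [div_eq_mul_inv, mul_inv, inv_inv]
  ring

section WeightedShift

variable {R K : Type*} [CommSemiring R] [CommRing K] [Algebra R K]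

def weightedShift (f : K) (σ : K ≃ₐ[R] K) : Module.End R K :=
  LinearMap.mulLeft R f * σ.toLinearMap

theorem weightedShift_mul_weightedShift (f g : K) (σ τ : K ≃ₐ[R] K) :
    weightedShift f σ * weightedShift g τ = weightedShift (f * σ g) (σ * τ) := by
  ext x
  simp [weightedShift, mul_assoc]

theorem weightedShift_sub (f g : K) (σ : K ≃ₐ[R] K) :
    weightedShift f σ - weightedShift g σ = weightedShift (f - g) σ := by
  ext x
  simp [weightedShift, sub_mul]

theorem mulLeft_mul_weightedShift (φ f : K) (σ : K ≃ₐ[R] K) :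
    LinearMap.mulLeft R φ * weightedShift f σ = weightedShift (φ * f) σ := by
  ext x
  simp [weightedShift]

theorem weightedShift_triple_commutator {σ τ υ : K ≃ₐ[R] K}
    (hστ : Commute σ τ) (hσυ : Commute σ υ) (hτυ : Commute τ υ)
    {α β γ ρ₁ ρ₂ ρ₃ ρ₄ ρ₅ φ : K}
    (hσβ : σ β = β * ρ₁) (hσγ : σ γ = γ * ρ₂) (hτγ : τ γ = γ * ρ₃) (hυβ : υ β = β * ρ₄)
    (hτα : τ α = α * ρ₅) (hυα : υ α = α)
    (hσρ₃ : σ ρ₃ = ρ₃) (hσρ₄ : σ ρ₄ = ρ₄) (hυρ₅ : υ ρ₅ = ρ₅)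
    (hφ : (ρ₁ * ρ₂ - ρ₅) * (ρ₃ - ρ₄) = φ * (ρ₁ * ρ₂ * ρ₃)) :
    weightedShift α σ * (weightedShift β τ * weightedShift γ υ -
        weightedShift γ υ * weightedShift β τ) -
      (weightedShift β τ * weightedShift γ υ - weightedShift γ υ * weightedShift β τ) *
        weightedShift α σ =
      LinearMap.mulLeft R φ * weightedShift α σ * weightedShift β τ * weightedShift γ υ := by
  have hσυτ : σ * υ * τ = σ * τ * υ := by rw [mul_assoc, ← hτυ.eq, ← mul_assoc]
  have hτυσ : τ * υ * σ = σ * τ * υ := by rw [← (hστ.mul_right hσυ).eq, mul_assoc]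
  have hυτσ : υ * τ * σ = σ * τ * υ := by rw [← hτυ.eq, hτυσ]
  simp only [mul_sub, sub_mul, ← mul_assoc, weightedShift_mul_weightedShift,
    mulLeft_mul_weightedShift, hσυτ, hτυσ, hυτσ, weightedShift_sub]
  congr 1
  simp only [AlgEquiv.mul_apply, map_mul, hσβ, hσγ, hτγ, hυβ, hτα, hυα, hσρ₃, hσρ₄, hυρ₅]
  linear_combination α * β * γ * hφ

end WeightedShift

theorem LinearIndependent.smul_add_smul_add_smul_add_smul_ne_zero {R M : Type*} [Ring R]
    [AddCommGroup M] [Module R M] {a b c h : M} (hli : LinearIndependent R ![a, b, c, h])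
    {x y z w : R} (hxyzw : x ≠ 0 ∨ y ≠ 0 ∨ z ≠ 0 ∨ w ≠ 0) :
    x • a + y • b + z • c + w • h ≠ 0 := by
  intro h0
  have hzero := Fintype.linearIndependent_iff.1 hli ![x, y, z, w]
    (by simpa [Fin.sum_univ_four, add_assoc] using h0)
  rcases hxyzw with hx | hy | hz | hw
  exacts [hx (hzero 0), hy (hzero 1), hz (hzero 2), hw (hzero 3)]

-- The ratios are written exactly as the shifts by `h` and `-h` produce them.
theorem gklo_weight_identity {K : Type*} [Field K] [Algebra ℂ K] {a b c h : K}
    (hli : LinearIndependent ℂ ![a, b, c, h]) :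
    ((b ^ 2 - a ^ 2) / (b ^ 2 - (a + h) ^ 2) * ((c + (a + h) + h / 2) / (c + a + h / 2)) -
        ((a + h) ^ 2 - (b + h) ^ 2) / ((a + h) ^ 2 - (b + -h + h) ^ 2)) *
      ((c + (b + -h) + h / 2) / (c + b + h / 2) -
        (b ^ 2 - (c + -h + h / 2) ^ 2) / (b ^ 2 - (c + h / 2) ^ 2)) =
    -(h ^ 2) * (a - b + 2 * c + h) / ((c - b + h / 2) * (b + a) * (c + a + 3 * h / 2)) *
      ((b ^ 2 - a ^ 2) / (b ^ 2 - (a + h) ^ 2) * ((c + (a + h) + h / 2) / (c + a + h / 2)) *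
        ((c + (b + -h) + h / 2) / (c + b + h / 2))) := by
  have : CharZero K := charZero_of_injective_algebraMap (algebraMap ℂ K).injective
  have hne {t : K} (x y z w : ℂ) (ht : t = x • a + y • b + z • c + w • h)
      (hxyzw : x ≠ 0 ∨ y ≠ 0 ∨ z ≠ 0 ∨ w ≠ 0) : t ≠ 0 :=
    ht ▸ hli.smul_add_smul_add_smul_add_smul_ne_zero hxyzw
  have h₁ : b - a - h ≠ 0 := hne (-1) 1 0 (-1) (by simp [Algebra.smul_def]; ring) (by norm_num)
  have h₂ : b + a + h ≠ 0 := hne 1 1 0 1 (by simp [Algebra.smul_def]; ring) (by norm_num)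
  have h₃ : c + a + h / 2 ≠ 0 :=
    hne 1 0 1 (1 / 2) (by simp [Algebra.smul_def, map_ofNat]; ring) (by norm_num)
  have h₄ : c + b + h / 2 ≠ 0 :=
    hne 0 1 1 (1 / 2) (by simp [Algebra.smul_def, map_ofNat]; ring) (by norm_num)
  have h₅ : c - b + h / 2 ≠ 0 :=
    hne 0 (-1) 1 (1 / 2) (by simp [Algebra.smul_def, map_ofNat]; ring) (by norm_num)
  have h₆ : b + a ≠ 0 := hne 1 1 0 0 (by simp [Algebra.smul_def]; ring) (by norm_num)
  have h₇ : c + a + 3 * h / 2 ≠ 0 :=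
    hne 1 0 1 (3 / 2) (by simp [Algebra.smul_def, map_ofNat]; ring) (by norm_num)
  have hA : b ^ 2 - (a + h) ^ 2 ≠ 0 := by
    rw [show b ^ 2 - (a + h) ^ 2 = (b - a - h) * (b + a + h) by ring]
    exact mul_ne_zero h₁ h₂
  have hC : (a + h) ^ 2 - b ^ 2 ≠ 0 := by
    rw [show (a + h) ^ 2 - b ^ 2 = -((b - a - h) * (b + a + h)) by ring]
    exact neg_ne_zero.2 (mul_ne_zero h₁ h₂)
  have hE : b ^ 2 - (c + h / 2) ^ 2 ≠ 0 := by
    rw [show b ^ 2 - (c + h / 2) ^ 2 = -((c - b + h / 2) * (c + b + h / 2)) by ring]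
    exact neg_ne_zero.2 (mul_ne_zero h₅ h₄)
  have hρ₁₂₅ : (b ^ 2 - a ^ 2) / (b ^ 2 - (a + h) ^ 2) * ((c + (a + h) + h / 2) / (c + a + h / 2)) -
        ((a + h) ^ 2 - (b + h) ^ 2) / ((a + h) ^ 2 - (b + -h + h) ^ 2) =
      h * (b - a) * (b - a - 2 * c - h) / ((b ^ 2 - (a + h) ^ 2) * (c + a + h / 2)) := by
    rw [neg_add_cancel_right, div_mul_div_comm, div_sub_div _ _ (mul_ne_zero hA h₃) hC,
      div_eq_div_iff (mul_ne_zero (mul_ne_zero hA h₃) hC) (mul_ne_zero hA h₃)]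
    ring
  have hρ₃₄ : (c + (b + -h) + h / 2) / (c + b + h / 2) -
        (b ^ 2 - (c + -h + h / 2) ^ 2) / (b ^ 2 - (c + h / 2) ^ 2) =
      -h * (c + b - h / 2) / (b ^ 2 - (c + h / 2) ^ 2) := by
    rw [div_sub_div _ _ h₄ hE, div_eq_div_iff (mul_ne_zero h₄ hE) hE]
    ring
  rw [hρ₁₂₅, hρ₃₄, div_mul_div_comm, div_mul_div_comm, div_mul_div_comm, div_mul_div_comm,
    div_eq_div_iff (mul_ne_zero (mul_ne_zero hA h₃) hE)
      (mul_ne_zero (mul_ne_zero (mul_ne_zero h₅ h₆) h₇) (mul_ne_zero (mul_ne_zero hA h₃) h₄))]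
  ring

theorem linearIndependent_algebraMap_X {R σ K ι : Type*} [CommRing R] [Field K]
    [Algebra (MvPolynomial σ R) K] [IsFractionRing (MvPolynomial σ R) K] [Algebra R K]
    [IsScalarTower R (MvPolynomial σ R) K] {v : ι → σ} (hv : Function.Injective v) :
    LinearIndependent R fun t => algebraMap (MvPolynomial σ R) K (MvPolynomial.X (v t)) :=
  ((MvPolynomial.linearIndependent_X σ R).comp v hv).map'
    (IsScalarTower.toAlgHom R (MvPolynomial σ R) K).toLinearMap
    (LinearMap.ker_eq_bot.2 (IsFractionRing.injective (MvPolynomial σ R) K))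

section TwistedGKLO

variable {n : ℕ} {m lam : ℕ → ℕ}

local notation "γ" => gam n m lam
local notation "ℏ" => hb n m lam

theorem gam_eq_algebraMap_X {i k : ℕ} (hi : i < n + 1) (hk : k - 1 < m i) :
    γ i k = algebraMap (MvPolynomial (GVar n m lam) ℂ) (GF n m lam)
      (MvPolynomial.X (Sum.inr (Sum.inl ⟨⟨i, hi⟩, ⟨k - 1, hk⟩⟩))) :=
  dif_pos ⟨hi, hk⟩

theorem gam_of_lt {i k : ℕ} (hi : n < i) : γ i k = 0 :=
  dif_neg fun h => by omega

theorem GF.algHom_ext {f g : GF n m lam →ₐ[ℂ] GF n m lam} (hh : f ℏ = g ℏ)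
    (hg : ∀ i k, 1 ≤ k → k ≤ m i → f (γ i k) = g (γ i k))
    (hr : ∀ i t, f (rv n m lam i t) = g (rv n m lam i t)) : f = g := by
  refine IsLocalization.algHom_ext (A := MvPolynomial (GVar n m lam) ℂ) (nonZeroDivisors _)
    (MvPolynomial.algHom_ext fun v => ?_)
  rcases v with _ | ⟨i, k⟩ | ⟨i, t⟩
  · exact hh
  · have := hg i (k + 1) (by omega) (by have := k.isLt; omega)
    rwa [gam, dif_pos ⟨i.isLt, by simp⟩] at this
  · have := hr i (t + 1)
    rwa [rv, dif_pos ⟨i.isLt, by simp⟩] at this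

theorem linearIndependent_gam {i k l p : ℕ} (hi : i + 1 ≤ n) (hk : k ∈ Finset.Icc 1 (m i))
    (hl : l ∈ Finset.Icc 1 (m i)) (hkl : k ≠ l) (hp : p ∈ Finset.Icc 1 (m (i + 1))) :
    LinearIndependent ℂ ![γ i k, γ i l, γ (i + 1) p, ℏ] := by
  simp only [Finset.mem_Icc] at hk hl hp
  have hk' : k - 1 < m i := by omega
  have hl' : l - 1 < m i := by omega
  have hp' : p - 1 < m (i + 1) := by omega
  let v : Fin 4 → GVar n m lam :=
    ![Sum.inr (Sum.inl ⟨⟨i, by omega⟩, ⟨k - 1, hk'⟩⟩),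
      Sum.inr (Sum.inl ⟨⟨i, by omega⟩, ⟨l - 1, hl'⟩⟩),
      Sum.inr (Sum.inl ⟨⟨i + 1, by omega⟩, ⟨p - 1, hp'⟩⟩), Sum.inl ()]
  have hv : Function.Injective v := by
    intro s t hst
    fin_cases s <;> fin_cases t <;> simp_all [v] <;> omega
  have hγ : ![γ i k, γ i l, γ (i + 1) p, ℏ] =
      fun t => algebraMap (MvPolynomial (GVar n m lam) ℂ) (GF n m lam) (MvPolynomial.X (v t)) := by
    ext t
    fin_cases t
    exacts [gam_eq_algebraMap_X _ _, gam_eq_algebraMap_X _ _, gam_eq_algebraMap_X _ _, rfl]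
  rw [hγ]
  exact linearIndependent_algebraMap_X hv

structure IsGamShift (σ : GF n m lam ≃ₐ[ℂ] GF n m lam) (i₀ k₀ : ℕ) (d : GF n m lam) : Prop where
  map_hb : σ ℏ = ℏ
  map_rv : ∀ i t, σ (rv n m lam i t) = rv n m lam i t
  map_gam : ∀ i k, 1 ≤ k → k ≤ m i → σ (γ i k) = γ i k + if i = i₀ ∧ k = k₀ then d else 0

namespace IsGamShift

variable {σ τ : GF n m lam ≃ₐ[ℂ] GF n m lam} {i₀ k₀ : ℕ} {d : GF n m lam}

theorem of_interior (hm0 : m 0 = 0) (hmn : m n = 0) (hi₀ : i₀ ≤ n) (hh : σ ℏ = ℏ)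
    (hr : ∀ i t, σ (rv n m lam i t) = rv n m lam i t)
    (hg : ∀ i k, 1 ≤ i → i ≤ n - 1 → 1 ≤ k → k ≤ m i →
      σ (γ i k) = if i = i₀ ∧ k = k₀ then γ i₀ k₀ + d else γ i k) :
    IsGamShift σ i₀ k₀ d where
  map_hb := hh
  map_rv := hr
  map_gam i k hk hk' := by
    -- `hg` only covers the rows `1, …, n - 1`: rows `0` and `n` are empty, and `γ i k` is the
    -- junk value `0` beyond row `n`.
    rcases lt_or_ge n i with hni | hin
    · rw [gam_of_lt hni, map_zero, if_neg (by omega), add_zero]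
    · have hi : 1 ≤ i := Nat.pos_of_ne_zero fun h => by simp [h, hm0] at hk'; omega
      have hi' : i ≤ n - 1 := by
        have : i ≠ n := fun h => by simp [h, hmn] at hk'; omega
        omega
      rw [hg i k hi hi' hk hk']
      split_ifs with h
      · rw [h.1, h.2]
      · rw [add_zero]

theorem map_gam_of_ne (hσ : IsGamShift σ i₀ k₀ d) {i k : ℕ} (hk : k ∈ Finset.Icc 1 (m i))
    (hne : ¬(i = i₀ ∧ k = k₀)) : σ (γ i k) = γ i k := by
  rw [hσ.map_gam i k (Finset.mem_Icc.1 hk).1 (Finset.mem_Icc.1 hk).2, if_neg hne, add_zero]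

theorem map_gam_self (hσ : IsGamShift σ i₀ k₀ d) (hk : k₀ ∈ Finset.Icc 1 (m i₀)) :
    σ (γ i₀ k₀) = γ i₀ k₀ + d := by
  rw [hσ.map_gam i₀ k₀ (Finset.mem_Icc.1 hk).1 (Finset.mem_Icc.1 hk).2, if_pos ⟨rfl, rfl⟩]

theorem commute {i₁ k₁ : ℕ} {d₁ : GF n m lam} (hσ : IsGamShift σ i₀ k₀ d)
    (hτ : IsGamShift τ i₁ k₁ d₁)
    (hσd : σ d₁ = d₁) (hτd : τ d = d) : Commute σ τ := by
  refine AlgEquiv.ext fun x => AlgHom.congr_fun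
    (GF.algHom_ext (f := (σ * τ).toAlgHom) (g := (τ * σ).toAlgHom) ?_ ?_ ?_) x
  · simp [hσ.map_hb, hτ.map_hb]
  · intro i k hk hk'
    simp only [AlgEquiv.coe_toAlgHom, AlgEquiv.mul_apply, map_add, hσ.map_gam i k hk hk',
      hτ.map_gam i k hk hk', apply_ite σ, apply_ite τ, hσd, hτd, map_zero]
    ring
  · simp [hσ.map_rv, hτ.map_rv]

theorem map_cc_succ (hσ : IsGamShift σ i₀ k₀ d) (hk₀ : k₀ ∈ Finset.Icc 1 (m i₀)) {p : ℕ}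
    (hp : p ∈ Finset.Icc 1 (m (i₀ + 1))) :
    σ (cc n m lam (i₀ + 1) p) = cc n m lam (i₀ + 1) p *
      ((γ (i₀ + 1) p + (γ i₀ k₀ + d) + ℏ / 2) / (γ (i₀ + 1) p + γ i₀ k₀ + ℏ / 2)) := by
  have hγp : σ (γ (i₀ + 1) p) = γ (i₀ + 1) p := hσ.map_gam_of_ne hp (by omega)
  have hnext :
      σ (∏ x ∈ Finset.Icc 1 (m (i₀ + 1 + 1)), (γ (i₀ + 1) p ^ 2 - (γ (i₀ + 1 + 1) x + ℏ / 2) ^ 2)) =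
      ∏ x ∈ Finset.Icc 1 (m (i₀ + 1 + 1)), (γ (i₀ + 1) p ^ 2 - (γ (i₀ + 1 + 1) x + ℏ / 2) ^ 2) :=
    map_prod_eq_self σ fun x hx => by
      simp only [map_sub, map_pow, map_add, map_div₀, map_ofNat, hσ.map_hb, hγp,
        hσ.map_gam_of_ne hx (by omega)]
  have hprev : σ (∏ x ∈ Finset.Icc 1 (m i₀), (γ (i₀ + 1) p + γ i₀ x + ℏ / 2)) =
      (∏ x ∈ Finset.Icc 1 (m i₀), (γ (i₀ + 1) p + γ i₀ x + ℏ / 2)) *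
        ((γ (i₀ + 1) p + (γ i₀ k₀ + d) + ℏ / 2) / (γ (i₀ + 1) p + γ i₀ k₀ + ℏ / 2)) := by
    rw [map_prod_eq_mul_div σ hk₀ fun x hx hxk => by
      simp only [map_add, map_div₀, map_ofNat, hσ.map_hb, hγp, hσ.map_gam_of_ne hx (by omega)]]
    simp only [map_add, map_div₀, map_ofNat, hσ.map_hb, hγp, hσ.map_gam_self hk₀]
  have hsame :
      σ (∏ x ∈ (Finset.Icc 1 (m (i₀ + 1))).erase p, (γ (i₀ + 1) p ^ 2 - γ (i₀ + 1) x ^ 2)) =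
      ∏ x ∈ (Finset.Icc 1 (m (i₀ + 1))).erase p, (γ (i₀ + 1) p ^ 2 - γ (i₀ + 1) x ^ 2) :=
    map_prod_eq_self σ fun x hx => by
      simp only [map_sub, map_pow, hγp, hσ.map_gam_of_ne (Finset.mem_of_mem_erase hx) (by omega)]
  simp only [cc, Nat.add_sub_cancel, map_div₀, map_mul, map_sub, map_ofNat, hσ.map_hb, hγp, hnext,
    hprev, hsame]
  ring

theorem map_cc_pred (hσ : IsGamShift σ (i₀ + 1) k₀ d) (hk₀ : k₀ ∈ Finset.Icc 1 (m (i₀ + 1)))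
    {l : ℕ} (hl : l ∈ Finset.Icc 1 (m i₀)) :
    σ (cc n m lam i₀ l) = cc n m lam i₀ l *
      ((γ i₀ l ^ 2 - (γ (i₀ + 1) k₀ + d + ℏ / 2) ^ 2) /
          (γ i₀ l ^ 2 - (γ (i₀ + 1) k₀ + ℏ / 2) ^ 2)) := by
  have hγl : σ (γ i₀ l) = γ i₀ l := hσ.map_gam_of_ne hl (by omega)
  have hnext : σ (∏ x ∈ Finset.Icc 1 (m (i₀ + 1)), (γ i₀ l ^ 2 - (γ (i₀ + 1) x + ℏ / 2) ^ 2)) =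
      (∏ x ∈ Finset.Icc 1 (m (i₀ + 1)), (γ i₀ l ^ 2 - (γ (i₀ + 1) x + ℏ / 2) ^ 2)) *
        ((γ i₀ l ^ 2 - (γ (i₀ + 1) k₀ + d + ℏ / 2) ^ 2) /
          (γ i₀ l ^ 2 - (γ (i₀ + 1) k₀ + ℏ / 2) ^ 2)) := by
    rw [map_prod_eq_mul_div σ hk₀ fun x hx hxk => by
      simp only [map_sub, map_pow, map_add, map_div₀, map_ofNat, hσ.map_hb, hγl,
        hσ.map_gam_of_ne hx (by omega)]]
    simp only [map_sub, map_pow, map_add, map_div₀, map_ofNat, hσ.map_hb, hγl, hσ.map_gam_self hk₀]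
  have hprev : σ (∏ x ∈ Finset.Icc 1 (m (i₀ - 1)), (γ i₀ l + γ (i₀ - 1) x + ℏ / 2)) =
      ∏ x ∈ Finset.Icc 1 (m (i₀ - 1)), (γ i₀ l + γ (i₀ - 1) x + ℏ / 2) :=
    map_prod_eq_self σ fun x hx => by
      simp only [map_add, map_div₀, map_ofNat, hσ.map_hb, hγl, hσ.map_gam_of_ne hx (by omega)]
  have hsame : σ (∏ x ∈ (Finset.Icc 1 (m i₀)).erase l, (γ i₀ l ^ 2 - γ i₀ x ^ 2)) =
      ∏ x ∈ (Finset.Icc 1 (m i₀)).erase l, (γ i₀ l ^ 2 - γ i₀ x ^ 2) :=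
    map_prod_eq_self σ fun x hx => by
      simp only [map_sub, map_pow, hγl, hσ.map_gam_of_ne (Finset.mem_of_mem_erase hx) (by omega)]
  simp only [cc, map_div₀, map_mul, map_sub, map_ofNat, hσ.map_hb, hγl, hnext, hprev, hsame]
  ring

theorem map_cc_of_ne (hσ : IsGamShift σ i₀ k₀ d) (hi₀ : 1 ≤ i₀) (hk₀ : k₀ ∈ Finset.Icc 1 (m i₀))
    {l : ℕ} (hl : l ∈ Finset.Icc 1 (m i₀)) (hlk : k₀ ≠ l) :
    σ (cc n m lam i₀ l) = cc n m lam i₀ l *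
      ((γ i₀ l ^ 2 - γ i₀ k₀ ^ 2) / (γ i₀ l ^ 2 - (γ i₀ k₀ + d) ^ 2)) := by
  have hγl : σ (γ i₀ l) = γ i₀ l := hσ.map_gam_of_ne hl (by omega)
  have hnext : σ (∏ x ∈ Finset.Icc 1 (m (i₀ + 1)), (γ i₀ l ^ 2 - (γ (i₀ + 1) x + ℏ / 2) ^ 2)) =
      ∏ x ∈ Finset.Icc 1 (m (i₀ + 1)), (γ i₀ l ^ 2 - (γ (i₀ + 1) x + ℏ / 2) ^ 2) :=
    map_prod_eq_self σ fun x hx => by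
      simp only [map_sub, map_pow, map_add, map_div₀, map_ofNat, hσ.map_hb, hγl,
        hσ.map_gam_of_ne hx (by omega)]
  have hprev : σ (∏ x ∈ Finset.Icc 1 (m (i₀ - 1)), (γ i₀ l + γ (i₀ - 1) x + ℏ / 2)) =
      ∏ x ∈ Finset.Icc 1 (m (i₀ - 1)), (γ i₀ l + γ (i₀ - 1) x + ℏ / 2) :=
    map_prod_eq_self σ fun x hx => by
      simp only [map_add, map_div₀, map_ofNat, hσ.map_hb, hγl, hσ.map_gam_of_ne hx (by omega)]
  have hsame : σ (∏ x ∈ (Finset.Icc 1 (m i₀)).erase l, (γ i₀ l ^ 2 - γ i₀ x ^ 2)) =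
      (∏ x ∈ (Finset.Icc 1 (m i₀)).erase l, (γ i₀ l ^ 2 - γ i₀ x ^ 2)) *
        ((γ i₀ l ^ 2 - (γ i₀ k₀ + d) ^ 2) / (γ i₀ l ^ 2 - γ i₀ k₀ ^ 2)) := by
    rw [map_prod_eq_mul_div σ (Finset.mem_erase.2 ⟨hlk, hk₀⟩) fun x hx hxk => by
      simp only [map_sub, map_pow, hγl, hσ.map_gam_of_ne (Finset.mem_of_mem_erase hx) (by omega)]]
    simp only [map_sub, map_pow, hγl, hσ.map_gam_self hk₀]
  simp only [cc, map_div₀, map_mul, map_sub, map_ofNat, hσ.map_hb, hγl, hnext, hprev, hsame]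
  exact div_mul_mul_div _ _ _ _ _

theorem map_cc'_of_ne (hσ : IsGamShift σ i₀ k₀ d) (hi₀ : 1 ≤ i₀) (hk₀ : k₀ ∈ Finset.Icc 1 (m i₀))
    {k : ℕ} (hk : k ∈ Finset.Icc 1 (m i₀)) (hkk₀ : k ≠ k₀) :
    σ (cc' n m lam i₀ k) = cc' n m lam i₀ k *
      ((xi n m lam i₀ k ^ 2 - xi n m lam i₀ k₀ ^ 2) /
        (xi n m lam i₀ k ^ 2 - (γ i₀ k₀ + d + ℏ) ^ 2)) := by
  have hγk : σ (γ i₀ k) = γ i₀ k := hσ.map_gam_of_ne hk (by omega)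
  have hxi : σ (xi n m lam i₀ k) = xi n m lam i₀ k := by rw [xi, map_add, hσ.map_hb, hγk]
  have hR : σ (RR n m lam i₀ (xi n m lam i₀ k)) = RR n m lam i₀ (xi n m lam i₀ k) :=
    map_prod_eq_self σ fun t _ => by simp only [map_sub, map_pow, hxi, hσ.map_rv]
  have hprev : σ (∏ x ∈ Finset.Icc 1 (m (i₀ - 1)), (xi n m lam i₀ k - γ (i₀ - 1) x - ℏ / 2)) =
      ∏ x ∈ Finset.Icc 1 (m (i₀ - 1)), (xi n m lam i₀ k - γ (i₀ - 1) x - ℏ / 2) :=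
    map_prod_eq_self σ fun x hx => by
      simp only [map_sub, map_div₀, map_ofNat, hσ.map_hb, hxi, hσ.map_gam_of_ne hx (by omega)]
  have hsame :
      σ (∏ x ∈ (Finset.Icc 1 (m i₀)).erase k, (xi n m lam i₀ k ^ 2 - xi n m lam i₀ x ^ 2)) =
      (∏ x ∈ (Finset.Icc 1 (m i₀)).erase k, (xi n m lam i₀ k ^ 2 - xi n m lam i₀ x ^ 2)) *
        ((xi n m lam i₀ k ^ 2 - (γ i₀ k₀ + d + ℏ) ^ 2) /
          (xi n m lam i₀ k ^ 2 - xi n m lam i₀ k₀ ^ 2)) := by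
    rw [map_prod_eq_mul_div σ (Finset.mem_erase.2 ⟨hkk₀.symm, hk₀⟩) fun x hx hxk => by
      simp only [xi, map_sub, map_pow, map_add, hσ.map_hb, hγk,
        hσ.map_gam_of_ne (Finset.mem_of_mem_erase hx) (by omega)]]
    simp only [xi, map_sub, map_pow, map_add, hσ.map_hb, hγk, hσ.map_gam_self hk₀]
  simp only [cc', map_div₀, map_mul, map_add, map_ofNat, hσ.map_hb, hγk, hR, hprev, hsame]
  exact div_mul_mul_div _ _ _ _ _

theorem map_cc'_eq_self (hσ : IsGamShift σ i₀ k₀ d) {i k : ℕ} (hi : i₀ ≠ i) (hi' : i₀ ≠ i - 1)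
    (hk : k ∈ Finset.Icc 1 (m i)) : σ (cc' n m lam i k) = cc' n m lam i k := by
  have hxi : ∀ x ∈ Finset.Icc 1 (m i), σ (xi n m lam i x) = xi n m lam i x := fun x hx => by
    rw [xi, map_add, hσ.map_hb, hσ.map_gam_of_ne hx (by omega)]
  have hR : σ (RR n m lam i (xi n m lam i k)) = RR n m lam i (xi n m lam i k) :=
    map_prod_eq_self σ fun t _ => by simp only [map_sub, map_pow, hxi k hk, hσ.map_rv]
  have hprev : σ (∏ x ∈ Finset.Icc 1 (m (i - 1)), (xi n m lam i k - γ (i - 1) x - ℏ / 2)) =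
      ∏ x ∈ Finset.Icc 1 (m (i - 1)), (xi n m lam i k - γ (i - 1) x - ℏ / 2) :=
    map_prod_eq_self σ fun x hx => by
      simp only [map_sub, map_div₀, map_ofNat, hσ.map_hb, hxi k hk,
        hσ.map_gam_of_ne hx (by omega)]
  have hsame : σ (∏ x ∈ (Finset.Icc 1 (m i)).erase k, (xi n m lam i k ^ 2 - xi n m lam i x ^ 2)) =
      ∏ x ∈ (Finset.Icc 1 (m i)).erase k, (xi n m lam i k ^ 2 - xi n m lam i x ^ 2) :=
    map_prod_eq_self σ fun x hx => by
      simp only [map_sub, map_pow, hxi k hk, hxi x (Finset.mem_of_mem_erase hx)]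
  simp only [cc', map_div₀, map_mul, map_add, map_ofNat, hσ.map_hb,
    hσ.map_gam_of_ne hk (by omega), hR, hprev, hsame]

end IsGamShift

end TwistedGKLO

theorem gklo_mixed_triple_3_general (n : ℕ) (m lam : ℕ → ℕ)
    (hm0 : m 0 = 0) (hmn : m n = 0)
    (σm σp : ℕ → ℕ → (GF n m lam ≃ₐ[ℂ] GF n m lam))
    (hσmh : ∀ i k, σm i k (hb n m lam) = hb n m lam)
    (hσph : ∀ i k, σp i k (hb n m lam) = hb n m lam)
    (hσmr : ∀ i k i' t, σm i k (rv n m lam i' t) = rv n m lam i' t)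
    (hσpr : ∀ i k i' t, σp i k (rv n m lam i' t) = rv n m lam i' t)
    (hσmg : ∀ i k i' k', 1 ≤ i' → i' ≤ n - 1 → 1 ≤ k' → k' ≤ m i' →
      σm i k (gam n m lam i' k') =
        if i' = i ∧ k' = k then gam n m lam i k - hb n m lam else gam n m lam i' k')
    (hσpg : ∀ i k i' k', 1 ≤ i' → i' ≤ n - 1 → 1 ≤ k' → k' ≤ m i' →
      σp i k (gam n m lam i' k') =
        if i' = i ∧ k' = k then gam n m lam i k + hb n m lam else gam n m lam i' k')
    (i k l p : ℕ)
    (hi : 1 ≤ i) (hi1 : i + 1 ≤ n - 1) (hk : 1 ≤ k) (hk' : k ≤ m i)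
    (hl : 1 ≤ l) (hl' : l ≤ m i) (hkl : k ≠ l)
    (hp : 1 ≤ p) (hp' : p ≤ m (i + 1)) :
    kap' n m lam σp i k *
          (kap n m lam σm i l * kap n m lam σm (i + 1) p -
            kap n m lam σm (i + 1) p * kap n m lam σm i l) -
        (kap n m lam σm i l * kap n m lam σm (i + 1) p -
            kap n m lam σm (i + 1) p * kap n m lam σm i l) *
          kap' n m lam σp i k =
      Mop n m lam
          (-(hb n m lam ^ 2) *
              (gam n m lam i k - gam n m lam i l + 2 * gam n m lam (i + 1) p + hb n m lam) /
            ((gam n m lam (i + 1) p - gam n m lam i l + hb n m lam / 2) *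
              (gam n m lam i l + gam n m lam i k) *
              (gam n m lam (i + 1) p + gam n m lam i k + 3 * hb n m lam / 2))) *
        kap' n m lam σp i k * kap n m lam σm i l * kap n m lam σm (i + 1) p := by
  have hk₀ : k ∈ Finset.Icc 1 (m i) := Finset.mem_Icc.2 ⟨hk, hk'⟩
  have hl₀ : l ∈ Finset.Icc 1 (m i) := Finset.mem_Icc.2 ⟨hl, hl'⟩
  have hp₀ : p ∈ Finset.Icc 1 (m (i + 1)) := Finset.mem_Icc.2 ⟨hp, hp'⟩
  have hP : IsGamShift (σp i k) i k (hb n m lam) :=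
    .of_interior hm0 hmn (by omega) (hσph i k) (hσpr i k) (hσpg i k)
  have hL : IsGamShift (σm i l) i l (-hb n m lam) :=
    .of_interior hm0 hmn (by omega) (hσmh i l) (hσmr i l)
      (by simpa only [sub_eq_add_neg] using hσmg i l)
  have hQ : IsGamShift (σm (i + 1) p) (i + 1) p (-hb n m lam) :=
    .of_interior hm0 hmn (by omega) (hσmh (i + 1) p) (hσmr (i + 1) p)
      (by simpa only [sub_eq_add_neg] using hσmg (i + 1) p)
  have hPb := hP.map_gam_of_ne hl₀ (by omega)
  have hPc := hP.map_gam_of_ne hp₀ (by omega)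
  have hQa := hQ.map_gam_of_ne hk₀ (by omega)
  have hQb := hQ.map_gam_of_ne hl₀ (by omega)
  -- `kap` and `kap'` unfold to `weightedShift`s.
  exact weightedShift_triple_commutator
    (hP.commute hL (by rw [map_neg, hP.map_hb]) hL.map_hb)
    (hP.commute hQ (by rw [map_neg, hP.map_hb]) hQ.map_hb)
    (hL.commute hQ (by rw [map_neg, hL.map_hb]) (by rw [map_neg, hQ.map_hb]))
    (hP.map_cc_of_ne hi hk₀ hl₀ hkl) (hP.map_cc_succ hk₀ hp₀) (hL.map_cc_succ hl₀ hp₀)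
    (hQ.map_cc_pred hp₀ hl₀) (hL.map_cc'_of_ne hi hl₀ hk₀ hkl)
    (hQ.map_cc'_eq_self (by omega) (by omega) hk₀)
    (by simp only [map_div₀, map_add, map_neg, map_ofNat, hP.map_hb, hPb, hPc])
    (by simp only [map_div₀, map_sub, map_pow, map_add, map_neg, map_ofNat, hP.map_hb, hPb, hPc])
    (by simp only [xi, map_div₀, map_sub, map_pow, map_add, map_neg, hQ.map_hb, hQa, hQb])
    (gklo_weight_identity (linearIndependent_gam (by omega) hk₀ hl₀ hkl hp₀))

theorem gklo_mixed_triple_3 (n : ℕ) (hn : 2 ≤ n) (m lam : ℕ → ℕ)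
    (hm0 : m 0 = 0) (hmn : m n = 0) (hlam0 : lam 0 = 0) (hlamn : lam n = 0)
    (σm σp : ℕ → ℕ → (GF n m lam ≃ₐ[ℂ] GF n m lam))
    (hσmh : ∀ i k, σm i k (hb n m lam) = hb n m lam)
    (hσph : ∀ i k, σp i k (hb n m lam) = hb n m lam)
    (hσmr : ∀ i k i' t, σm i k (rv n m lam i' t) = rv n m lam i' t)
    (hσpr : ∀ i k i' t, σp i k (rv n m lam i' t) = rv n m lam i' t)
    (hσmg : ∀ i k i' k', 1 ≤ i' → i' ≤ n - 1 → 1 ≤ k' → k' ≤ m i' →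
      σm i k (gam n m lam i' k') =
        if i' = i ∧ k' = k then gam n m lam i k - hb n m lam else gam n m lam i' k')
    (hσpg : ∀ i k i' k', 1 ≤ i' → i' ≤ n - 1 → 1 ≤ k' → k' ≤ m i' →
      σp i k (gam n m lam i' k') =
        if i' = i ∧ k' = k then gam n m lam i k + hb n m lam else gam n m lam i' k')
    (i k l p : ℕ)
    (hi : 1 ≤ i) (hi1 : i + 1 ≤ n - 1) (hk : 1 ≤ k) (hk' : k ≤ m i)
    (hl : 1 ≤ l) (hl' : l ≤ m i) (hkl : k ≠ l)
    (hp : 1 ≤ p) (hp' : p ≤ m (i + 1)) :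
    kap' n m lam σp i k *
          (kap n m lam σm i l * kap n m lam σm (i + 1) p -
            kap n m lam σm (i + 1) p * kap n m lam σm i l) -
        (kap n m lam σm i l * kap n m lam σm (i + 1) p -
            kap n m lam σm (i + 1) p * kap n m lam σm i l) *
          kap' n m lam σp i k =
      Mop n m lam
          (-(hb n m lam ^ 2) *
              (gam n m lam i k - gam n m lam i l + 2 * gam n m lam (i + 1) p + hb n m lam) /
            ((gam n m lam (i + 1) p - gam n m lam i l + hb n m lam / 2) *
              (gam n m lam i l + gam n m lam i k) *
              (gam n m lam (i + 1) p + gam n m lam i k + 3 * hb n m lam / 2))) *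
        kap' n m lam σp i k * kap n m lam σm i l * kap n m lam σm (i + 1) p :=
  gklo_mixed_triple_3_general n m lam hm0 hmn σm σp hσmh hσph hσmr hσpr hσmg hσpg i k l p hi hi1 hk
    hk' hl hl' hkl hp hp'
end
end

section
/- With the twisted GKLO operators and the rational function S as in the context: suppose i and i+1 both lie in I, let 1 ≤ k ≤ m_i and 1 ≤ l ≤ m_{i+1}. Then the following identity of ℂ-linear endomorphisms of F holds: κ_{i,k} ∘ κ'_{i,k} ∘ κ'_{i+1,l} − 2 κ_{i,k} ∘ κ'_{i+1,l} ∘ κ'_{i,k} + κ'_{i+1,l} ∘ κ_{i,k} ∘ κ'_{i,k} = M( ½ℏ · S_{i,k}^{i+1,l} / (γ_{i,k} + ½ℏ) ) ∘ κ'_{i+1,l}. -/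
/- Twisted GKLO representation setup (type AI).
   Indices: `i ∈ I = {1,…,n−1}`, `1 ≤ k ≤ m i`, with conventions `m 0 = m n = 0`
   (and `lam 0 = lam n = 0`), so that the indeterminates are exactly
   `ℏ`, `γ_{i,k}` (`i ∈ I`, `1 ≤ k ≤ m i`), `r_{i,t}` (`i ∈ I`, `1 ≤ t ≤ lam i`). -/

noncomputable section

/-- The rational function `S_{i,k}^{i+1,l}`. -/
def Sfun (n : ℕ) (m lam : ℕ → ℕ) (i k l : ℕ) : GF n m lam :=
  (RR n m lam i (gam n m lam i k) *
      ((∏ l' ∈ Finset.Icc 1 (m (i - 1)),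
          (gam n m lam i k ^ 2 - (gam n m lam (i - 1) l' + hb n m lam / 2) ^ 2)) *
        ∏ l' ∈ Finset.Icc 1 (m (i + 1)),
          (gam n m lam i k ^ 2 - (gam n m lam (i + 1) l' + hb n m lam / 2) ^ 2))) /
  ((gam n m lam i k ^ 2 - (gam n m lam (i + 1) l + hb n m lam / 2) ^ 2) *
    ∏ l' ∈ (Finset.Icc 1 (m i)).erase k,
      ((gam n m lam i k ^ 2 - gam n m lam i l' ^ 2) *
        (gam n m lam i k ^ 2 - xi n m lam i l' ^ 2)))




set_option linter.unnecessarySimpa false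
set_option maxHeartbeats 1600000

-- expressing the generators
lemma gam_eq_X {n : ℕ} {m lam : ℕ → ℕ} (j t : ℕ) (hj : j < n + 1) (ht : t - 1 < m j) :
    gam n m lam j t = algebraMap (MvPolynomial (GVar n m lam) ℂ) (GF n m lam)
      (MvPolynomial.X (Sum.inr (Sum.inl ⟨⟨j, hj⟩, ⟨t - 1, ht⟩⟩))) := by
  rw [gam, dif_pos ⟨hj, ht⟩]

lemma rv_eq_X {n : ℕ} {m lam : ℕ → ℕ} (j t : ℕ) (hj : j < n + 1) (ht : t - 1 < lam j) :
    rv n m lam j t = algebraMap (MvPolynomial (GVar n m lam) ℂ) (GF n m lam)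
      (MvPolynomial.X (Sum.inr (Sum.inr ⟨⟨j, hj⟩, ⟨t - 1, ht⟩⟩))) := by
  rw [rv, dif_pos ⟨hj, ht⟩]

lemma gam_fin {n : ℕ} {m lam : ℕ → ℕ} (j : Fin (n+1)) (t : Fin (m j)) :
    algebraMap (MvPolynomial (GVar n m lam) ℂ) (GF n m lam)
      (MvPolynomial.X (Sum.inr (Sum.inl ⟨j, t⟩))) = gam n m lam j.val (t.val + 1) := by
  rw [gam_eq_X j.val (t.val+1) j.isLt (by simpa using t.isLt)]
  rfl

lemma rv_fin {n : ℕ} {m lam : ℕ → ℕ} (j : Fin (n+1)) (t : Fin (lam j)) :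
    algebraMap (MvPolynomial (GVar n m lam) ℂ) (GF n m lam)
      (MvPolynomial.X (Sum.inr (Sum.inr ⟨j, t⟩))) = rv n m lam j.val (t.val + 1) := by
  rw [rv_eq_X j.val (t.val+1) j.isLt (by simpa using t.isLt)]
  rfl

-- distinctness of variables
lemma gv_ne_fst {n : ℕ} {m lam : ℕ → ℕ} {i1 k1 i2 k2 : ℕ} {h1 h2 h3 h4}
    (hne : i1 ≠ i2) :
    (Sum.inr (Sum.inl ⟨⟨i1, h1⟩, ⟨k1, h2⟩⟩) : GVar n m lam)
      ≠ Sum.inr (Sum.inl ⟨⟨i2, h3⟩, ⟨k2, h4⟩⟩) := by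
  intro h
  simp only [Sum.inr.injEq, Sum.inl.injEq, Sigma.mk.inj_iff, Fin.mk.injEq] at h
  exact hne h.1

lemma gv_ne_snd {n : ℕ} {m lam : ℕ → ℕ} {i1 k1 k2 : ℕ} {h1 h2 h4}
    (hne : k1 ≠ k2) :
    (Sum.inr (Sum.inl ⟨⟨i1, h1⟩, ⟨k1, h2⟩⟩) : GVar n m lam)
      ≠ Sum.inr (Sum.inl ⟨⟨i1, h1⟩, ⟨k2, h4⟩⟩) := by
  intro h
  simp only [Sum.inr.injEq, Sum.inl.injEq, Sigma.mk.inj_iff, heq_eq_eq, Fin.mk.injEq] at h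
  exact hne h.2

-- nonzeroness of linear combinations of variables
lemma comb_ne_zero' {n : ℕ} {m lam : ℕ → ℕ} (q1 q2 q3 : ℂ) (a b : GVar n m lam)
    (x : GF n m lam) (hq : q1 ≠ 0) (hba : b ≠ a) (hha : (Sum.inl () : GVar n m lam) ≠ a)
    (hx : x = algebraMap ℂ (GF n m lam) q1 *
        algebraMap (MvPolynomial (GVar n m lam) ℂ) (GF n m lam) (MvPolynomial.X a)
      + algebraMap ℂ (GF n m lam) q2 *
        algebraMap (MvPolynomial (GVar n m lam) ℂ) (GF n m lam) (MvPolynomial.X b)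
      + algebraMap ℂ (GF n m lam) q3 *
        algebraMap (MvPolynomial (GVar n m lam) ℂ) (GF n m lam) (MvPolynomial.X (Sum.inl ()))) :
    x ≠ 0 := by
  subst hx
  intro h0
  have hrep : ∀ q : ℂ, algebraMap ℂ (GF n m lam) q
      = algebraMap (MvPolynomial (GVar n m lam) ℂ) (GF n m lam) (MvPolynomial.C q) := fun q => by
    rw [IsScalarTower.algebraMap_apply ℂ (MvPolynomial (GVar n m lam) ℂ) (GF n m lam),
      MvPolynomial.algebraMap_eq]
  have h0' : algebraMap (MvPolynomial (GVar n m lam) ℂ) (GF n m lam)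
      (MvPolynomial.C q1 * MvPolynomial.X a + MvPolynomial.C q2 * MvPolynomial.X b
        + MvPolynomial.C q3 * MvPolynomial.X (Sum.inl ())) = 0 := by
    rw [RingHom.map_add, RingHom.map_add, RingHom.map_mul, RingHom.map_mul, RingHom.map_mul, ← hrep, ← hrep, ← hrep]
    exact h0
  have hP : (MvPolynomial.C q1 * MvPolynomial.X a + MvPolynomial.C q2 * MvPolynomial.X b
      + MvPolynomial.C q3 * MvPolynomial.X (Sum.inl ()) : MvPolynomial (GVar n m lam) ℂ) = 0 :=
    IsFractionRing.injective (MvPolynomial (GVar n m lam) ℂ) (GF n m lam) (by rw [map_zero]; exact h0')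
  apply hq
  have := congrArg (MvPolynomial.eval (fun w => if w = a then (1:ℂ) else 0)) hP
  simpa [MvPolynomial.eval_X, hba, hha] using this

lemma two_ne_zero_GF {n : ℕ} {m lam : ℕ → ℕ} : (2 : GF n m lam) ≠ 0 := by
  intro h
  have h1 : algebraMap ℂ (GF n m lam) 2 = 2 := map_ofNat _ 2
  exact two_ne_zero ((algebraMap ℂ (GF n m lam)).injective (by rw [h1, h, map_zero]))

-- composition of automorphisms determined on generators
lemma algequiv_comp_eq {n : ℕ} {m lam : ℕ → ℕ}
    (φ ψ φ' ψ' : GF n m lam ≃ₐ[ℂ] GF n m lam)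
    (H : ∀ v : GVar n m lam,
      φ (ψ (algebraMap (MvPolynomial (GVar n m lam) ℂ) (GF n m lam) (MvPolynomial.X v)))
      = φ' (ψ' (algebraMap (MvPolynomial (GVar n m lam) ℂ) (GF n m lam) (MvPolynomial.X v)))) :
    ∀ x, φ (ψ x) = φ' (ψ' x) := by
  have key : ((φ : GF n m lam →+* GF n m lam).comp (ψ : GF n m lam →+* GF n m lam))
      = ((φ' : GF n m lam →+* GF n m lam).comp (ψ' : GF n m lam →+* GF n m lam)) := by
    apply IsLocalization.ringHom_ext (nonZeroDivisors (MvPolynomial (GVar n m lam) ℂ))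
    apply MvPolynomial.ringHom_ext
    · intro a
      have ha : algebraMap (MvPolynomial (GVar n m lam) ℂ) (GF n m lam) (MvPolynomial.C a)
          = algebraMap ℂ (GF n m lam) a := by
        rw [IsScalarTower.algebraMap_apply ℂ (MvPolynomial (GVar n m lam) ℂ) (GF n m lam),
          MvPolynomial.algebraMap_eq]
      simp [RingHom.comp_apply, ha, AlgEquiv.commutes]
    · intro v
      simpa [RingHom.comp_apply] using H v
  intro x
  exact RingHom.congr_fun key x


lemma hb_eq_X {n : ℕ} {m lam : ℕ → ℕ} :
    hb n m lam = algebraMap (MvPolynomial (GVar n m lam) ℂ) (GF n m lam)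
      (MvPolynomial.X (Sum.inl ())) := rfl

lemma algequiv_comp_id {n : ℕ} {m lam : ℕ → ℕ}
    (φ ψ : GF n m lam ≃ₐ[ℂ] GF n m lam)
    (H : ∀ v : GVar n m lam,
      φ (ψ (algebraMap (MvPolynomial (GVar n m lam) ℂ) (GF n m lam) (MvPolynomial.X v)))
      = algebraMap (MvPolynomial (GVar n m lam) ℂ) (GF n m lam) (MvPolynomial.X v)) :
    ∀ x, φ (ψ x) = x := by
  have := algequiv_comp_eq φ ψ (AlgEquiv.refl) (AlgEquiv.refl) (by
    intro v
    simpa using H v)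
  intro x
  simpa using this x

lemma key_field_identity {F : Type*} [Field F]
    (g u b Pp Q Qp D E Rg Rp T W : F)
    (h2 : (2:F) ≠ 0)
    (hd1 : g - u ≠ 0) (hd2 : g + u ≠ 0) (hD : D ≠ 0) (hE : E ≠ 0)
    (hW : W ≠ 0) (hb2 : g^2 - b^2 ≠ 0) :
    (((g^2-b^2)*Pp*Q)/(2*(g-u)*D)) * ((Rg*Qp)/(2*(g+u)*E)) * ((Rp*((b-g)*T))/W)
      - 2 * ((((g^2-b^2)*Pp*Q)/(2*(g-u)*D)) * ((Rp*((b+2*u-g)*T))/W) * ((Rg*Qp)/(2*(g+u)*E)))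
      + ((Rp*((b-g)*T))/W) * (((g^2-(b+2*u)^2)*Pp*Q)/(2*(g-u)*D)) * ((Rg*Qp)/(2*(g+u)*E))
    = (u * ((Rg*((Q*Qp)*((g^2-b^2)*Pp)))/((g^2-b^2)*(D*E))) / (g+u)) * ((Rp*((b-g)*T))/W) := by
  have hΔ : (2*(g-u)*D) * (2*(g+u)*E) * W ≠ 0 :=
    mul_ne_zero (mul_ne_zero (mul_ne_zero (mul_ne_zero h2 hd1) hD)
      (mul_ne_zero (mul_ne_zero h2 hd2) hE)) hW
  have hΔ' : ((g^2-b^2)*(D*E)) * (g+u) * W ≠ 0 :=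
    mul_ne_zero (mul_ne_zero (mul_ne_zero hb2 (mul_ne_zero hD hE)) hd2) hW
  have e1 : (((g^2-b^2)*Pp*Q)/(2*(g-u)*D)) * ((Rg*Qp)/(2*(g+u)*E)) * ((Rp*((b-g)*T))/W)
      = (((g^2-b^2)*Pp*Q) * (Rg*Qp) * (Rp*((b-g)*T))) / ((2*(g-u)*D) * (2*(g+u)*E) * W) := by
    rw [div_mul_div_comm, div_mul_div_comm]
  have e2 : (((g^2-b^2)*Pp*Q)/(2*(g-u)*D)) * ((Rp*((b+2*u-g)*T))/W) * ((Rg*Qp)/(2*(g+u)*E))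
      = (((g^2-b^2)*Pp*Q) * (Rp*((b+2*u-g)*T)) * (Rg*Qp)) / ((2*(g-u)*D) * (2*(g+u)*E) * W) := by
    rw [div_mul_div_comm, div_mul_div_comm,
      show (2*(g-u)*D) * W * (2*(g+u)*E) = (2*(g-u)*D) * (2*(g+u)*E) * W from by ring]
  have e3 : ((Rp*((b-g)*T))/W) * (((g^2-(b+2*u)^2)*Pp*Q)/(2*(g-u)*D)) * ((Rg*Qp)/(2*(g+u)*E))
      = ((Rp*((b-g)*T)) * ((g^2-(b+2*u)^2)*Pp*Q) * (Rg*Qp)) / ((2*(g-u)*D) * (2*(g+u)*E) * W) := by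
    rw [div_mul_div_comm, div_mul_div_comm,
      show W * (2*(g-u)*D) * (2*(g+u)*E) = (2*(g-u)*D) * (2*(g+u)*E) * W from by ring]
  have e4 : (u * ((Rg*((Q*Qp)*((g^2-b^2)*Pp)))/((g^2-b^2)*(D*E))) / (g+u)) * ((Rp*((b-g)*T))/W)
      = (u * (Rg*((Q*Qp)*((g^2-b^2)*Pp))) * (Rp*((b-g)*T))) / (((g^2-b^2)*(D*E)) * (g+u) * W) := by
    rw [mul_div_assoc', mul_div_assoc', div_div, div_mul_eq_mul_div, div_div]
  rw [e1, e2, e3, e4, mul_div_assoc', div_sub_div_same, ← add_div, div_eq_div_iff hΔ hΔ']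
  ring


theorem gklo_xxx_S_identity_2 (n : ℕ) (hn : 2 ≤ n) (m lam : ℕ → ℕ)
    (hm0 : m 0 = 0) (hmn : m n = 0) (hlam0 : lam 0 = 0) (hlamn : lam n = 0)
    (σm σp : ℕ → ℕ → (GF n m lam ≃ₐ[ℂ] GF n m lam))
    (hσmh : ∀ i k, σm i k (hb n m lam) = hb n m lam)
    (hσph : ∀ i k, σp i k (hb n m lam) = hb n m lam)
    (hσmr : ∀ i k i' t, σm i k (rv n m lam i' t) = rv n m lam i' t)
    (hσpr : ∀ i k i' t, σp i k (rv n m lam i' t) = rv n m lam i' t)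
    (hσmg : ∀ i k i' k', 1 ≤ i' → i' ≤ n - 1 → 1 ≤ k' → k' ≤ m i' →
      σm i k (gam n m lam i' k') =
        if i' = i ∧ k' = k then gam n m lam i k - hb n m lam else gam n m lam i' k')
    (hσpg : ∀ i k i' k', 1 ≤ i' → i' ≤ n - 1 → 1 ≤ k' → k' ≤ m i' →
      σp i k (gam n m lam i' k') =
        if i' = i ∧ k' = k then gam n m lam i k + hb n m lam else gam n m lam i' k')
    (i k l : ℕ)
    (hi : 1 ≤ i) (hi1 : i + 1 ≤ n - 1) (hk : 1 ≤ k) (hk' : k ≤ m i)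
    (hl : 1 ≤ l) (hl' : l ≤ m (i + 1)) :
    kap n m lam σm i k * kap' n m lam σp i k * kap' n m lam σp (i + 1) l -
        2 * (kap n m lam σm i k * kap' n m lam σp (i + 1) l * kap' n m lam σp i k) +
        kap' n m lam σp (i + 1) l * kap n m lam σm i k * kap' n m lam σp i k =
      Mop n m lam
          (hb n m lam / 2 * Sfun n m lam i k l / (gam n m lam i k + hb n m lam / 2)) *
        kap' n m lam σp (i + 1) l := by

  -- index bounds
  have hiv : i < n + 1 := by omega
  have hkv : k - 1 < m i := by omega
  have hi1v : i + 1 < n + 1 := by omega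
  have hlv : l - 1 < m (i + 1) := by omega
  have k_mem : k ∈ Finset.Icc 1 (m i) := Finset.mem_Icc.mpr ⟨hk, hk'⟩
  have l_mem : l ∈ Finset.Icc 1 (m (i + 1)) := Finset.mem_Icc.mpr ⟨hl, hl'⟩
  -- basic sigma values
  have sgm : σm i k (gam n m lam i k) = gam n m lam i k - hb n m lam := by
    rw [hσmg i k i k hi (by omega) hk hk', if_pos ⟨rfl, rfl⟩]
  have sgq : σp (i + 1) l (gam n m lam (i + 1) l) = gam n m lam (i + 1) l + hb n m lam := by
    rw [hσpg (i + 1) l (i + 1) l (by omega) hi1 hl hl', if_pos ⟨rfl, rfl⟩]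
  have fixm : ∀ j t, j ≤ n → 1 ≤ t → t ≤ m j → ¬(j = i ∧ t = k) →
      σm i k (gam n m lam j t) = gam n m lam j t := by
    intro j t hjn h1t h2t hne
    rcases Nat.eq_zero_or_pos j with rfl | hj0
    · rw [hm0] at h2t; omega
    rcases eq_or_lt_of_le hjn with hj | hlt
    · rw [hj, hmn] at h2t; omega
    · rw [hσmg i k j t hj0 (by omega) h1t h2t, if_neg hne]
  have fixq : ∀ j t, j ≤ n → 1 ≤ t → t ≤ m j → ¬(j = i + 1 ∧ t = l) →
      σp (i + 1) l (gam n m lam j t) = gam n m lam j t := by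
    intro j t hjn h1t h2t hne
    rcases Nat.eq_zero_or_pos j with rfl | hj0
    · rw [hm0] at h2t; omega
    rcases eq_or_lt_of_le hjn with hj | hlt
    · rw [hj, hmn] at h2t; omega
    · rw [hσpg (i + 1) l j t hj0 (by omega) h1t h2t, if_neg hne]
  -- composite automorphism facts
  have hBA : ∀ x, σm i k (σp i k x) = x := by
    apply algequiv_comp_id
    intro v
    rcases v with ⟨⟩ | (⟨j, t⟩ | ⟨j, t⟩)
    · rw [← hb_eq_X, hσph, hσmh]
    · rw [gam_fin j t]
      have htlt : (t : ℕ) < m (j : ℕ) := t.isLt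
      by_cases hj0 : (j : ℕ) = 0
      · exfalso; have hmj : m (j : ℕ) = 0 := by rw [hj0]; exact hm0
        omega
      by_cases hjn : (j : ℕ) = n
      · exfalso; have hmj : m (j : ℕ) = 0 := by rw [hjn]; exact hmn
        omega
      have hb2' : (j : ℕ) ≤ n - 1 := by have := j.isLt; omega
      rw [hσpg i k (j : ℕ) ((t : ℕ) + 1) (by omega) hb2' (by omega) htlt]
      by_cases hc : (j : ℕ) = i ∧ (t : ℕ) + 1 = k
      · rw [if_pos hc, map_add, hσmh, sgm, ← hc.1, ← hc.2]
        ring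
      · rw [if_neg hc, fixm (j : ℕ) ((t : ℕ) + 1) (by omega) (by omega) htlt hc]
    · rw [rv_fin j t, hσpr, hσmr]
  have hCo : ∀ x, σm i k (σp (i + 1) l x) = σp (i + 1) l (σm i k x) := by
    apply algequiv_comp_eq
    intro v
    rcases v with ⟨⟩ | (⟨j, t⟩ | ⟨j, t⟩)
    · rw [← hb_eq_X, hσph, hσmh, hσph]
    · rw [gam_fin j t]
      have htlt : (t : ℕ) < m (j : ℕ) := t.isLt
      by_cases hj0 : (j : ℕ) = 0
      · exfalso; have hmj : m (j : ℕ) = 0 := by rw [hj0]; exact hm0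
        omega
      by_cases hjn : (j : ℕ) = n
      · exfalso; have hmj : m (j : ℕ) = 0 := by rw [hjn]; exact hmn
        omega
      have hb2' : (j : ℕ) ≤ n - 1 := by have := j.isLt; omega
      by_cases hc1 : (j : ℕ) = i ∧ (t : ℕ) + 1 = k
      · rw [fixq (j : ℕ) ((t : ℕ) + 1) (by omega) (by omega) htlt (by omega),
          hσmg i k (j : ℕ) ((t : ℕ) + 1) (by omega) hb2' (by omega) htlt, if_pos hc1,
          map_sub, hσph, fixq i k (by omega) hk hk' (by omega)]
      · by_cases hc2 : (j : ℕ) = i + 1 ∧ (t : ℕ) + 1 = l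
        · rw [hσpg (i + 1) l (j : ℕ) ((t : ℕ) + 1) (by omega) hb2' (by omega) htlt, if_pos hc2,
            map_add, hσmh, fixm (i + 1) l (by omega) hl hl' (by omega),
            fixm (j : ℕ) ((t : ℕ) + 1) (by omega) (by omega) htlt (by omega),
            hσpg (i + 1) l (j : ℕ) ((t : ℕ) + 1) (by omega) hb2' (by omega) htlt, if_pos hc2]
        · rw [fixq (j : ℕ) ((t : ℕ) + 1) (by omega) (by omega) htlt hc2,
            fixm (j : ℕ) ((t : ℕ) + 1) (by omega) (by omega) htlt hc1,
            fixq (j : ℕ) ((t : ℕ) + 1) (by omega) (by omega) htlt hc2]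
    · rw [rv_fin j t]
      simp only [hσmr, hσpr]
  -- image computations
  have hAcp : σm i k (cc' n m lam i k) = ((RR n m lam i (gam n m lam i k)) * (∏ l' ∈ Finset.Icc 1 (m (i - 1)), (gam n m lam i k - gam n m lam (i - 1) l' - hb n m lam / 2))) / (2 * (gam n m lam i k + hb n m lam / 2) * (∏ l' ∈ (Finset.Icc 1 (m i)).erase k, (gam n m lam i k ^ 2 - xi n m lam i l' ^ 2))) := by
    have e1 : σm i k (RR n m lam i (xi n m lam i k)) = RR n m lam i (gam n m lam i k) := by
      simp only [RR, map_prod]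
      refine Finset.prod_congr rfl fun t ht => ?_
      simp only [xi, map_sub, map_pow, map_add, hσmh, hσmr, sgm]
      ring
    have e2 : σm i k (∏ l' ∈ Finset.Icc 1 (m (i - 1)),
        (xi n m lam i k - gam n m lam (i - 1) l' - hb n m lam / 2)) = ∏ l' ∈ Finset.Icc 1 (m (i - 1)), (gam n m lam i k - gam n m lam (i - 1) l' - hb n m lam / 2) := by
      rw [map_prod]
      refine Finset.prod_congr rfl fun t ht => ?_
      rw [Finset.mem_Icc] at ht
      simp only [xi, map_sub, map_add, map_div₀, map_ofNat, hσmh, sgm]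
      rw [fixm (i - 1) t (by omega) ht.1 ht.2 (by omega)]
      ring
    have e3 : σm i k (2 * (gam n m lam i k + 3 * hb n m lam / 2)) = 2 * (gam n m lam i k + hb n m lam / 2) := by
      simp only [map_mul, map_add, map_div₀, map_ofNat, hσmh, sgm]
      ring
    have e4 : σm i k (∏ l' ∈ (Finset.Icc 1 (m i)).erase k,
        (xi n m lam i k ^ 2 - xi n m lam i l' ^ 2)) = ∏ l' ∈ (Finset.Icc 1 (m i)).erase k, (gam n m lam i k ^ 2 - xi n m lam i l' ^ 2) := by
      rw [map_prod]
      refine Finset.prod_congr rfl fun t ht => ?_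
      rw [Finset.mem_erase, Finset.mem_Icc] at ht
      simp only [xi, map_sub, map_add, map_pow, hσmh, sgm]
      rw [fixm i t (by omega) ht.2.1 ht.2.2 (fun hcon => ht.1 hcon.2)]
      ring
    rw [cc', map_div₀, map_mul, map_mul, e1, e2, e3, e4]
  have hAcpp : σm i k (cc' n m lam (i + 1) l)
      = ((RR n m lam (i + 1) (xi n m lam (i + 1) l)) * ((gam n m lam (i + 1) l + hb n m lam / 2 + 2 * (hb n m lam / 2) - gam n m lam i k) * (∏ l' ∈ (Finset.Icc 1 (m i)).erase k, (xi n m lam (i + 1) l - gam n m lam i l' - hb n m lam / 2)))) / (2 * (gam n m lam (i + 1) l + 3 * hb n m lam / 2) * ∏ l' ∈ (Finset.Icc 1 (m (i + 1))).erase l, (xi n m lam (i + 1) l ^ 2 - xi n m lam (i + 1) l' ^ 2)) := by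
    have e1 : σm i k (RR n m lam (i + 1) (xi n m lam (i + 1) l)) = RR n m lam (i + 1) (xi n m lam (i + 1) l) := by
      simp only [RR, map_prod]
      refine Finset.prod_congr rfl fun t ht => ?_
      simp only [xi, map_sub, map_pow, map_add, hσmh, hσmr]
      rw [fixm (i + 1) l (by omega) hl hl' (by omega)]
    have e2 : σm i k (∏ l' ∈ Finset.Icc 1 (m i),
        (xi n m lam (i + 1) l - gam n m lam i l' - hb n m lam / 2))
        = (gam n m lam (i + 1) l + hb n m lam / 2 + 2 * (hb n m lam / 2) - gam n m lam i k) * (∏ l' ∈ (Finset.Icc 1 (m i)).erase k, (xi n m lam (i + 1) l - gam n m lam i l' - hb n m lam / 2)) := by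
      rw [map_prod, ← Finset.mul_prod_erase _ _ k_mem]
      congr 1
      · simp only [xi, map_sub, map_add, map_div₀, map_ofNat, hσmh, sgm]
        rw [fixm (i + 1) l (by omega) hl hl' (by omega)]
        ring
      · refine Finset.prod_congr rfl fun t ht => ?_
        rw [Finset.mem_erase, Finset.mem_Icc] at ht
        simp only [xi, map_sub, map_add, map_div₀, map_ofNat, hσmh]
        rw [fixm (i + 1) l (by omega) hl hl' (by omega),
          fixm i t (by omega) ht.2.1 ht.2.2 (fun hcon => ht.1 hcon.2)]
    have e3 : σm i k (2 * (gam n m lam (i + 1) l + 3 * hb n m lam / 2)) = 2 * (gam n m lam (i + 1) l + 3 * hb n m lam / 2) := by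
      simp only [map_mul, map_add, map_div₀, map_ofNat, hσmh]
      rw [fixm (i + 1) l (by omega) hl hl' (by omega)]
    have e4 : σm i k (∏ l' ∈ (Finset.Icc 1 (m (i + 1))).erase l,
        (xi n m lam (i + 1) l ^ 2 - xi n m lam (i + 1) l' ^ 2))
        = ∏ l' ∈ (Finset.Icc 1 (m (i + 1))).erase l,
          (xi n m lam (i + 1) l ^ 2 - xi n m lam (i + 1) l' ^ 2) := by
      rw [map_prod]
      refine Finset.prod_congr rfl fun t ht => ?_
      rw [Finset.mem_erase, Finset.mem_Icc] at ht
      simp only [xi, map_sub, map_add, map_pow, hσmh]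
      rw [fixm (i + 1) l (by omega) hl hl' (by omega),
        fixm (i + 1) t (by omega) ht.2.1 ht.2.2 (by omega)]
    rw [cc']
    simp only [Nat.add_sub_cancel]
    rw [map_div₀, map_mul, map_mul, e1, e2, e3, e4]
  have hCc : σp (i + 1) l (cc n m lam i k)
      = ((gam n m lam i k ^ 2 - (gam n m lam (i + 1) l + hb n m lam / 2 + 2 * (hb n m lam / 2)) ^ 2) * (∏ l' ∈ (Finset.Icc 1 (m (i + 1))).erase l, (gam n m lam i k ^ 2 - (gam n m lam (i + 1) l' + hb n m lam / 2) ^ 2)) * (∏ l' ∈ Finset.Icc 1 (m (i - 1)), (gam n m lam i k + gam n m lam (i - 1) l' + hb n m lam / 2)))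
        / (2 * (gam n m lam i k - hb n m lam / 2) * (∏ l' ∈ (Finset.Icc 1 (m i)).erase k, (gam n m lam i k ^ 2 - gam n m lam i l' ^ 2))) := by
    have e1 : σp (i + 1) l (∏ l' ∈ Finset.Icc 1 (m (i + 1)),
        (gam n m lam i k ^ 2 - (gam n m lam (i + 1) l' + hb n m lam / 2) ^ 2))
        = (gam n m lam i k ^ 2 - (gam n m lam (i + 1) l + hb n m lam / 2 + 2 * (hb n m lam / 2)) ^ 2) * (∏ l' ∈ (Finset.Icc 1 (m (i + 1))).erase l, (gam n m lam i k ^ 2 - (gam n m lam (i + 1) l' + hb n m lam / 2) ^ 2)) := by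
      rw [map_prod, ← Finset.mul_prod_erase _ _ l_mem]
      congr 1
      · simp only [map_sub, map_add, map_pow, map_div₀, map_ofNat, hσph, sgq]
        rw [fixq i k (by omega) hk hk' (by omega)]
        ring
      · refine Finset.prod_congr rfl fun t ht => ?_
        rw [Finset.mem_erase, Finset.mem_Icc] at ht
        simp only [map_sub, map_add, map_pow, map_div₀, map_ofNat, hσph]
        rw [fixq i k (by omega) hk hk' (by omega),
          fixq (i + 1) t (by omega) ht.2.1 ht.2.2 (fun hcon => ht.1 hcon.2)]
    have e2 : σp (i + 1) l (∏ l' ∈ Finset.Icc 1 (m (i - 1)), (gam n m lam i k + gam n m lam (i - 1) l' + hb n m lam / 2)) = ∏ l' ∈ Finset.Icc 1 (m (i - 1)), (gam n m lam i k + gam n m lam (i - 1) l' + hb n m lam / 2) := by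
      rw [map_prod]
      refine Finset.prod_congr rfl fun t ht => ?_
      rw [Finset.mem_Icc] at ht
      simp only [map_add, map_div₀, map_ofNat, hσph]
      rw [fixq i k (by omega) hk hk' (by omega),
        fixq (i - 1) t (by omega) ht.1 ht.2 (by omega)]
    have e3 : σp (i + 1) l (2 * (gam n m lam i k - hb n m lam / 2)) = 2 * (gam n m lam i k - hb n m lam / 2) := by
      simp only [map_mul, map_sub, map_div₀, map_ofNat, hσph]
      rw [fixq i k (by omega) hk hk' (by omega)]
    have e4 : σp (i + 1) l (∏ l' ∈ (Finset.Icc 1 (m i)).erase k, (gam n m lam i k ^ 2 - gam n m lam i l' ^ 2)) = ∏ l' ∈ (Finset.Icc 1 (m i)).erase k, (gam n m lam i k ^ 2 - gam n m lam i l' ^ 2) := by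
      rw [map_prod]
      refine Finset.prod_congr rfl fun t ht => ?_
      rw [Finset.mem_erase, Finset.mem_Icc] at ht
      simp only [map_sub, map_pow]
      rw [fixq i k (by omega) hk hk' (by omega),
        fixq i t (by omega) ht.2.1 ht.2.2 (by omega)]
    rw [cc, map_div₀, map_mul, map_mul, e1, e2, e3, e4]
  have hCAcp : σp (i + 1) l (((RR n m lam i (gam n m lam i k)) * (∏ l' ∈ Finset.Icc 1 (m (i - 1)), (gam n m lam i k - gam n m lam (i - 1) l' - hb n m lam / 2))) / (2 * (gam n m lam i k + hb n m lam / 2) * (∏ l' ∈ (Finset.Icc 1 (m i)).erase k, (gam n m lam i k ^ 2 - xi n m lam i l' ^ 2)))) = ((RR n m lam i (gam n m lam i k)) * (∏ l' ∈ Finset.Icc 1 (m (i - 1)), (gam n m lam i k - gam n m lam (i - 1) l' - hb n m lam / 2))) / (2 * (gam n m lam i k + hb n m lam / 2) * (∏ l' ∈ (Finset.Icc 1 (m i)).erase k, (gam n m lam i k ^ 2 - xi n m lam i l' ^ 2))) := by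
    have e1 : σp (i + 1) l (RR n m lam i (gam n m lam i k)) = RR n m lam i (gam n m lam i k) := by
      simp only [RR, map_prod]
      refine Finset.prod_congr rfl fun t ht => ?_
      simp only [map_sub, map_pow, hσpr]
      rw [fixq i k (by omega) hk hk' (by omega)]
    have e2 : σp (i + 1) l (∏ l' ∈ Finset.Icc 1 (m (i - 1)), (gam n m lam i k - gam n m lam (i - 1) l' - hb n m lam / 2)) = ∏ l' ∈ Finset.Icc 1 (m (i - 1)), (gam n m lam i k - gam n m lam (i - 1) l' - hb n m lam / 2) := by
      rw [map_prod]
      refine Finset.prod_congr rfl fun t ht => ?_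
      rw [Finset.mem_Icc] at ht
      simp only [map_sub, map_div₀, map_ofNat, hσph]
      rw [fixq i k (by omega) hk hk' (by omega),
        fixq (i - 1) t (by omega) ht.1 ht.2 (by omega)]
    have e3 : σp (i + 1) l (2 * (gam n m lam i k + hb n m lam / 2)) = 2 * (gam n m lam i k + hb n m lam / 2) := by
      simp only [map_mul, map_add, map_div₀, map_ofNat, hσph]
      rw [fixq i k (by omega) hk hk' (by omega)]
    have e4 : σp (i + 1) l (∏ l' ∈ (Finset.Icc 1 (m i)).erase k, (gam n m lam i k ^ 2 - xi n m lam i l' ^ 2)) = ∏ l' ∈ (Finset.Icc 1 (m i)).erase k, (gam n m lam i k ^ 2 - xi n m lam i l' ^ 2) := by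
      rw [map_prod]
      refine Finset.prod_congr rfl fun t ht => ?_
      rw [Finset.mem_erase, Finset.mem_Icc] at ht
      simp only [xi, map_sub, map_add, map_pow, hσph]
      rw [fixq i k (by omega) hk hk' (by omega),
        fixq i t (by omega) ht.2.1 ht.2.2 (by omega)]
    rw [map_div₀, map_mul, map_mul, e1, e2, e3, e4]
  -- rewriting cc, cc', Sfun into split form
  have hc : cc n m lam i k
      = ((gam n m lam i k ^ 2 - (gam n m lam (i + 1) l + hb n m lam / 2) ^ 2) * (∏ l' ∈ (Finset.Icc 1 (m (i + 1))).erase l, (gam n m lam i k ^ 2 - (gam n m lam (i + 1) l' + hb n m lam / 2) ^ 2)) * (∏ l' ∈ Finset.Icc 1 (m (i - 1)), (gam n m lam i k + gam n m lam (i - 1) l' + hb n m lam / 2))) / (2 * (gam n m lam i k - hb n m lam / 2) * (∏ l' ∈ (Finset.Icc 1 (m i)).erase k, (gam n m lam i k ^ 2 - gam n m lam i l' ^ 2))) := by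
    rw [cc, ← Finset.mul_prod_erase _ _ l_mem]
  have hcpp : cc' n m lam (i + 1) l
      = ((RR n m lam (i + 1) (xi n m lam (i + 1) l)) * ((gam n m lam (i + 1) l + hb n m lam / 2 - gam n m lam i k) * (∏ l' ∈ (Finset.Icc 1 (m i)).erase k, (xi n m lam (i + 1) l - gam n m lam i l' - hb n m lam / 2)))) / (2 * (gam n m lam (i + 1) l + 3 * hb n m lam / 2) * ∏ l' ∈ (Finset.Icc 1 (m (i + 1))).erase l, (xi n m lam (i + 1) l ^ 2 - xi n m lam (i + 1) l' ^ 2)) := by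
    rw [cc']
    simp only [Nat.add_sub_cancel]
    rw [← Finset.mul_prod_erase _ _ k_mem,
      show xi n m lam (i + 1) l - gam n m lam i k - hb n m lam / 2
        = gam n m lam (i + 1) l + hb n m lam / 2 - gam n m lam i k from by rw [xi]; ring]
  have hSf : Sfun n m lam i k l
      = ((RR n m lam i (gam n m lam i k)) * (((∏ l' ∈ Finset.Icc 1 (m (i - 1)), (gam n m lam i k + gam n m lam (i - 1) l' + hb n m lam / 2)) * (∏ l' ∈ Finset.Icc 1 (m (i - 1)), (gam n m lam i k - gam n m lam (i - 1) l' - hb n m lam / 2))) * ((gam n m lam i k ^ 2 - (gam n m lam (i + 1) l + hb n m lam / 2) ^ 2) * (∏ l' ∈ (Finset.Icc 1 (m (i + 1))).erase l, (gam n m lam i k ^ 2 - (gam n m lam (i + 1) l' + hb n m lam / 2) ^ 2)))))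
        / ((gam n m lam i k ^ 2 - (gam n m lam (i + 1) l + hb n m lam / 2) ^ 2) * ((∏ l' ∈ (Finset.Icc 1 (m i)).erase k, (gam n m lam i k ^ 2 - gam n m lam i l' ^ 2)) * (∏ l' ∈ (Finset.Icc 1 (m i)).erase k, (gam n m lam i k ^ 2 - xi n m lam i l' ^ 2)))) := by
    rw [Sfun]
    have hQQp : ∏ l' ∈ Finset.Icc 1 (m (i - 1)),
        (gam n m lam i k ^ 2 - (gam n m lam (i - 1) l' + hb n m lam / 2) ^ 2)
        = (∏ l' ∈ Finset.Icc 1 (m (i - 1)),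
            (gam n m lam i k + gam n m lam (i - 1) l' + hb n m lam / 2)) *
          (∏ l' ∈ Finset.Icc 1 (m (i - 1)),
            (gam n m lam i k - gam n m lam (i - 1) l' - hb n m lam / 2)) :=
      (Finset.prod_congr rfl fun t ht => by ring).trans Finset.prod_mul_distrib
    have hDE : ∏ l' ∈ (Finset.Icc 1 (m i)).erase k,
        ((gam n m lam i k ^ 2 - gam n m lam i l' ^ 2) *
          (gam n m lam i k ^ 2 - xi n m lam i l' ^ 2))
        = (∏ l' ∈ (Finset.Icc 1 (m i)).erase k,
            (gam n m lam i k ^ 2 - gam n m lam i l' ^ 2)) *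
          (∏ l' ∈ (Finset.Icc 1 (m i)).erase k,
            (gam n m lam i k ^ 2 - xi n m lam i l' ^ 2)) := Finset.prod_mul_distrib
    rw [hQQp, hDE, ← Finset.mul_prod_erase _ _ l_mem]
  -- nonzero facts
  have h2 : (2 : GF n m lam) ≠ 0 := two_ne_zero_GF
  have hd1 : gam n m lam i k - hb n m lam / 2 ≠ 0 := by
    refine comb_ne_zero' 1 0 (-(1/2)) (Sum.inr (Sum.inl ⟨⟨i, hiv⟩, ⟨k - 1, hkv⟩⟩)) (Sum.inl ()) _ one_ne_zero (by simp) (by simp) ?_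
    rw [gam_eq_X i k hiv hkv, hb_eq_X]
    simp only [map_one, map_zero, map_neg, map_div₀, map_ofNat, one_mul, zero_mul, add_zero]
    ring
  have hd2 : gam n m lam i k + hb n m lam / 2 ≠ 0 := by
    refine comb_ne_zero' 1 0 (1/2) (Sum.inr (Sum.inl ⟨⟨i, hiv⟩, ⟨k - 1, hkv⟩⟩)) (Sum.inl ()) _ one_ne_zero (by simp) (by simp) ?_
    rw [gam_eq_X i k hiv hkv, hb_eq_X]
    simp only [map_one, map_zero, map_div₀, map_ofNat, one_mul, zero_mul, add_zero]
    ring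
  have hbb : gam n m lam i k ^ 2 - (gam n m lam (i + 1) l + hb n m lam / 2) ^ 2 ≠ 0 := by
    rw [show gam n m lam i k ^ 2 - (gam n m lam (i + 1) l + hb n m lam / 2) ^ 2
      = (gam n m lam i k - gam n m lam (i + 1) l - hb n m lam / 2) * (gam n m lam i k + gam n m lam (i + 1) l + hb n m lam / 2) from by ring]
    refine mul_ne_zero ?_ ?_
    · refine comb_ne_zero' 1 (-1) (-(1/2)) (Sum.inr (Sum.inl ⟨⟨i, hiv⟩, ⟨k - 1, hkv⟩⟩)) (Sum.inr (Sum.inl ⟨⟨i + 1, hi1v⟩, ⟨l - 1, hlv⟩⟩)) _ one_ne_zero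
        (gv_ne_fst (by omega)) (by simp) ?_
      rw [gam_eq_X i k hiv hkv, gam_eq_X (i + 1) l hi1v hlv, hb_eq_X]
      simp only [map_one, map_neg, map_div₀, map_ofNat, one_mul]
      ring
    · refine comb_ne_zero' 1 1 (1/2) (Sum.inr (Sum.inl ⟨⟨i, hiv⟩, ⟨k - 1, hkv⟩⟩)) (Sum.inr (Sum.inl ⟨⟨i + 1, hi1v⟩, ⟨l - 1, hlv⟩⟩)) _ one_ne_zero
        (gv_ne_fst (by omega)) (by simp) ?_
      rw [gam_eq_X i k hiv hkv, gam_eq_X (i + 1) l hi1v hlv, hb_eq_X]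
      simp only [map_one, map_div₀, map_ofNat, one_mul]
      ring
  have hD : (∏ l' ∈ (Finset.Icc 1 (m i)).erase k, (gam n m lam i k ^ 2 - gam n m lam i l' ^ 2)) ≠ 0 := by
    refine Finset.prod_ne_zero_iff.mpr fun t ht => ?_
    rw [Finset.mem_erase, Finset.mem_Icc] at ht
    have htv : t - 1 < m i := by omega
    rw [show gam n m lam i k ^ 2 - gam n m lam i t ^ 2
      = (gam n m lam i k - gam n m lam i t) * (gam n m lam i k + gam n m lam i t) from by ring]
    refine mul_ne_zero ?_ ?_
    · refine comb_ne_zero' 1 (-1) 0 (Sum.inr (Sum.inl ⟨⟨i, hiv⟩, ⟨k - 1, hkv⟩⟩)) (Sum.inr (Sum.inl ⟨⟨i, hiv⟩, ⟨t - 1, htv⟩⟩)) _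
        one_ne_zero (gv_ne_snd (by omega)) (by simp) ?_
      rw [gam_eq_X i k hiv hkv, gam_eq_X i t hiv htv]
      simp only [map_one, map_neg, map_zero, one_mul, zero_mul, add_zero]
      ring
    · refine comb_ne_zero' 1 1 0 (Sum.inr (Sum.inl ⟨⟨i, hiv⟩, ⟨k - 1, hkv⟩⟩)) (Sum.inr (Sum.inl ⟨⟨i, hiv⟩, ⟨t - 1, htv⟩⟩)) _
        one_ne_zero (gv_ne_snd (by omega)) (by simp) ?_
      rw [gam_eq_X i k hiv hkv, gam_eq_X i t hiv htv]
      simp only [map_one, map_zero, one_mul, zero_mul, add_zero]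
  have hE : (∏ l' ∈ (Finset.Icc 1 (m i)).erase k, (gam n m lam i k ^ 2 - xi n m lam i l' ^ 2)) ≠ 0 := by
    refine Finset.prod_ne_zero_iff.mpr fun t ht => ?_
    rw [Finset.mem_erase, Finset.mem_Icc] at ht
    have htv : t - 1 < m i := by omega
    rw [show gam n m lam i k ^ 2 - xi n m lam i t ^ 2
      = (gam n m lam i k - gam n m lam i t - hb n m lam) * (gam n m lam i k + gam n m lam i t + hb n m lam) from by rw [xi]; ring]
    refine mul_ne_zero ?_ ?_
    · refine comb_ne_zero' 1 (-1) (-1) (Sum.inr (Sum.inl ⟨⟨i, hiv⟩, ⟨k - 1, hkv⟩⟩)) (Sum.inr (Sum.inl ⟨⟨i, hiv⟩, ⟨t - 1, htv⟩⟩)) _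
        one_ne_zero (gv_ne_snd (by omega)) (by simp) ?_
      rw [gam_eq_X i k hiv hkv, gam_eq_X i t hiv htv, hb_eq_X]
      simp only [map_one, map_neg, one_mul]
      ring
    · refine comb_ne_zero' 1 1 1 (Sum.inr (Sum.inl ⟨⟨i, hiv⟩, ⟨k - 1, hkv⟩⟩)) (Sum.inr (Sum.inl ⟨⟨i, hiv⟩, ⟨t - 1, htv⟩⟩)) _
        one_ne_zero (gv_ne_snd (by omega)) (by simp) ?_
      rw [gam_eq_X i k hiv hkv, gam_eq_X i t hiv htv, hb_eq_X]
      simp only [map_one, one_mul]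
  have hW : (2 * (gam n m lam (i + 1) l + 3 * hb n m lam / 2) * ∏ l' ∈ (Finset.Icc 1 (m (i + 1))).erase l, (xi n m lam (i + 1) l ^ 2 - xi n m lam (i + 1) l' ^ 2)) ≠ 0 := by
    refine mul_ne_zero (mul_ne_zero h2 ?_) ?_
    · refine comb_ne_zero' 1 0 (3/2) (Sum.inr (Sum.inl ⟨⟨i + 1, hi1v⟩, ⟨l - 1, hlv⟩⟩)) (Sum.inl ()) _ one_ne_zero (by simp) (by simp) ?_
      rw [gam_eq_X (i + 1) l hi1v hlv, hb_eq_X]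
      simp only [map_one, map_zero, map_div₀, map_ofNat, one_mul, zero_mul, add_zero]
      ring
    · refine Finset.prod_ne_zero_iff.mpr fun t ht => ?_
      rw [Finset.mem_erase, Finset.mem_Icc] at ht
      have htv : t - 1 < m (i + 1) := by omega
      rw [show xi n m lam (i + 1) l ^ 2 - xi n m lam (i + 1) t ^ 2
        = (gam n m lam (i + 1) l - gam n m lam (i + 1) t) * (gam n m lam (i + 1) l + gam n m lam (i + 1) t + 2 * (hb n m lam)) from by
          rw [xi, xi]; ring]
      refine mul_ne_zero ?_ ?_
      · refine comb_ne_zero' 1 (-1) 0 (Sum.inr (Sum.inl ⟨⟨i + 1, hi1v⟩, ⟨l - 1, hlv⟩⟩))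
          (Sum.inr (Sum.inl ⟨⟨i + 1, hi1v⟩, ⟨t - 1, htv⟩⟩)) _
          one_ne_zero (gv_ne_snd (by omega)) (by simp) ?_
        rw [gam_eq_X (i + 1) l hi1v hlv, gam_eq_X (i + 1) t hi1v htv]
        simp only [map_one, map_neg, map_zero, one_mul, zero_mul, add_zero]
        ring
      · refine comb_ne_zero' 1 1 2 (Sum.inr (Sum.inl ⟨⟨i + 1, hi1v⟩, ⟨l - 1, hlv⟩⟩))
          (Sum.inr (Sum.inl ⟨⟨i + 1, hi1v⟩, ⟨t - 1, htv⟩⟩)) _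
          one_ne_zero (gv_ne_snd (by omega)) (by simp) ?_
        rw [gam_eq_X (i + 1) l hi1v hlv, gam_eq_X (i + 1) t hi1v htv, hb_eq_X]
        simp only [map_one, map_ofNat, one_mul]
  have KEY := key_field_identity (gam n m lam i k) (hb n m lam / 2) (gam n m lam (i + 1) l + hb n m lam / 2)
    (∏ l' ∈ (Finset.Icc 1 (m (i + 1))).erase l, (gam n m lam i k ^ 2 - (gam n m lam (i + 1) l' + hb n m lam / 2) ^ 2)) (∏ l' ∈ Finset.Icc 1 (m (i - 1)), (gam n m lam i k + gam n m lam (i - 1) l' + hb n m lam / 2)) (∏ l' ∈ Finset.Icc 1 (m (i - 1)), (gam n m lam i k - gam n m lam (i - 1) l' - hb n m lam / 2)) (∏ l' ∈ (Finset.Icc 1 (m i)).erase k, (gam n m lam i k ^ 2 - gam n m lam i l' ^ 2)) (∏ l' ∈ (Finset.Icc 1 (m i)).erase k, (gam n m lam i k ^ 2 - xi n m lam i l' ^ 2)) (RR n m lam i (gam n m lam i k)) (RR n m lam (i + 1) (xi n m lam (i + 1) l)) (∏ l' ∈ (Finset.Icc 1 (m i)).erase k, (xi n m lam (i + 1) l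 - gam n m lam i l' - hb n m lam / 2)) (2 * (gam n m lam (i + 1) l + 3 * hb n m lam / 2) * ∏ l' ∈ (Finset.Icc 1 (m (i + 1))).erase l, (xi n m lam (i + 1) l ^ 2 - xi n m lam (i + 1) l' ^ 2))
    h2 hd1 hd2 hD hE hW hbb
  -- reduce the operator identity to the scalar identity
  rw [two_mul]
  apply LinearMap.ext
  intro x
  simp only [LinearMap.sub_apply, LinearMap.add_apply, Module.End.mul_apply, kap, kap', Mop,
    LinearMap.mulLeft_apply, AlgEquiv.toLinearMap_apply]
  simp only [map_mul]
  simp only [hCo, hBA]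
  simp only [hAcp, hAcpp, hCc, hCAcp]
  rw [hc, hcpp, hSf]
  linear_combination (σp (i + 1) l x) * KEY
end
end

section
/- With the twisted GKLO operators and the rational function S as in the context: suppose i and i+1 both lie in I, let 1 ≤ k ≤ m_i and 1 ≤ l ≤ m_{i+1}. Then the following three identities of ℂ-linear endomorphisms of F hold: (a) κ_{i,k} ∘ κ'_{i,k} ∘ κ_{i+1,l} = M( (γ_{i,k}² − (γ_{i+1,l} + ½ℏ)²) / (4(γ_{i,k} − ½ℏ)(γ_{i,k} + ½ℏ)) · S_{i,k}^{i+1,l} ) ∘ κ_{i+1,l}; (b) κ_{i,k} ∘ κ_{i+1,l} ∘ κ'_{i,k} = M( ((γ_{i,k} − ½ℏ)² − γ_{i+1,l}²) / (4(γ_{i,k} − ½ℏ)(γ_{i,k} + ½ℏ)) · S_{i,k}^{i+1,l} ) ∘ κ_{i+1,l}; (c) κ_{i+1,l} ∘ κ_{i,k} ∘ κ'_{i,k} = M( (γ_{i,k}² − (γ_{i+1,l} − ½ℏ)²) / (4(γ_{i,k} − ½ℏ)(γ_{i,k} + ½ℏ)) · S_{i,k}^{i+1,l} ) ∘ κ_{i+1,l}.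 -/
/- Twisted GKLO representation setup (type AI).
   Indices: `i ∈ I = {1,…,n−1}`, `1 ≤ k ≤ m i`, with conventions `m 0 = m n = 0`
   (and `lam 0 = lam n = 0`), so that the indeterminates are exactly
   `ℏ`, `γ_{i,k}` (`i ∈ I`, `1 ≤ k ≤ m i`), `r_{i,t}` (`i ∈ I`, `1 ≤ t ≤ lam i`). -/

noncomputable section

/-!
Each `κ` is `M(c) ∘ σ`, and `σ ∘ M(f) = M(σ f) ∘ σ`, so each triple product is a multiplication
operator composed with a product of three automorphisms. The automorphisms shift single
variables `γ_{a,b}` by `±ℏ`; such a shift is determined by its effect on the generators, so the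
shifts commute and `σ⁻_{i,k} σ⁺_{i,k} = 1`, and all three automorphism parts reduce to
`σ⁻_{i+1,l}`. For the coefficients, (a) is the direct computation `c_{i,k} · σ⁻_{i,k}(c'_{i,k}) =
(γ_{i,k}² − (γ_{i+1,l} + ℏ/2)²) S / (4(γ_{i,k} − ℏ/2)(γ_{i,k} + ℏ/2))`. The other two differ from
it by one factor: `σ⁻_{i,k}` only moves the factor `γ_{i+1,l} + γ_{i,k} + ℏ/2` of `c_{i+1,l}`,
while `σ⁻_{i+1,l}` fixes `c'_{i,k}` and only moves the factor `γ_{i,k}² − (γ_{i+1,l} + ℏ/2)²`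
of `c_{i,k}`.
-/

theorem FractionRing.mvPolynomial_algHom_ext {R σ B : Type*} [CommRing R] [Semiring B]
    [Algebra R B] {f g : FractionRing (MvPolynomial σ R) →ₐ[R] B}
    (h : ∀ v, f (algebraMap (MvPolynomial σ R) _ (MvPolynomial.X v)) =
      g (algebraMap (MvPolynomial σ R) _ (MvPolynomial.X v))) :
    f = g :=
  IsLocalization.algHom_ext (nonZeroDivisors _) (MvPolynomial.algHom_ext h)

theorem LinearMap.mulLeft_mul_algEquiv_mul {R A : Type*} [CommSemiring R] [Semiring A]
    [Algebra R A] (a b : A) (e₁ e₂ : A ≃ₐ[R] A) :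
    mulLeft R a * e₁.toLinearMap * (mulLeft R b * e₂.toLinearMap) =
      mulLeft R (a * e₁ b) * (e₁ * e₂).toLinearMap := by
  ext x
  simp [mul_assoc]

theorem LinearMap.mulLeft_mul_mulLeft_mul {R A : Type*} [CommSemiring R] [Semiring A]
    [Algebra R A] (a b : A) (f : Module.End R A) :
    mulLeft R a * (mulLeft R b * f) = mulLeft R (a * b) * f := by
  ext
  simp

theorem ne_zero_of_map_eq_add {M F : Type*} [AddZeroClass M] [FunLike F M M] [ZeroHomClass F M M]
    (f : F) {x c : M} (h : f x = x + c) (hc : c ≠ 0) : x ≠ 0 := by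
  rintro rfl
  simp only [map_zero, zero_add] at h
  exact hc h.symm

section Shift

variable {n : ℕ} {m lam : ℕ → ℕ}

local notation "γ" => gam n m lam
local notation "ℏ" => hb n m lam
local notation "ξ" => xi n m lam

/- Rows `0` and `n` are empty (`m 0 = m n = 0`), so ranging over all rows `a ≤ n` covers the
neighbouring rows `i - 1` and `i + 2` of the theorem without boundary cases. -/
structure IsShift (e : GF n m lam ≃ₐ[ℂ] GF n m lam) (d : ℕ × ℕ → ℤ) : Prop where
  apply_hb : e ℏ = ℏ
  apply_rv : ∀ i t, e (rv n m lam i t) = rv n m lam i t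
  apply_gam : ∀ a b, a ≤ n → b ∈ Finset.Icc 1 (m a) → e (γ a b) = γ a b + d (a, b) * ℏ

variable {e e' : GF n m lam ≃ₐ[ℂ] GF n m lam} {d d' : ℕ × ℕ → ℤ}

theorem isShift_one : IsShift (1 : GF n m lam ≃ₐ[ℂ] GF n m lam) 0 :=
  ⟨rfl, fun _ _ => rfl, fun _ _ _ _ => by simp⟩

theorem isShift_single (hm0 : m 0 = 0) (hmn : m n = 0) {i k : ℕ} (s : ℤ) {v : GF n m lam}
    (hv : v = γ i k + s * ℏ) (hh : e ℏ = ℏ) (hr : ∀ i t, e (rv n m lam i t) = rv n m lam i t)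
    (hg : ∀ a b, 1 ≤ a → a ≤ n - 1 → 1 ≤ b → b ≤ m a →
      e (γ a b) = if a = i ∧ b = k then v else γ a b) :
    IsShift e (Pi.single (i, k) s) := by
  refine ⟨hh, hr, fun a b ha hab => ?_⟩
  rw [Finset.mem_Icc] at hab
  have ha0 : a ≠ 0 := by rintro rfl; omega
  have han : a ≠ n := by rintro rfl; omega
  rw [hg a b (by omega) (by omega) hab.1 hab.2]
  by_cases hab : a = i ∧ b = k
  · obtain ⟨rfl, rfl⟩ := hab
    simp [hv]
  · simp [hab]

theorem IsShift.mul (he : IsShift e d) (he' : IsShift e' d') : IsShift (e * e') (d + d') := by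
  refine ⟨by simp [he.apply_hb, he'.apply_hb], by simp [he.apply_rv, he'.apply_rv],
    fun a b ha hab => ?_⟩
  simp only [AlgEquiv.mul_apply, he'.apply_gam a b ha hab, map_add, map_mul, map_intCast,
    he.apply_gam a b ha hab, he.apply_hb, Pi.add_apply, Int.cast_add]
  ring

theorem IsShift.eq (he : IsShift e d) (he' : IsShift e' d) : e = e' := by
  refine AlgEquiv.coe_toAlgHom_injective (FractionRing.mvPolynomial_algHom_ext ?_)
  rintro (⟨⟩ | ⟨a, b⟩ | ⟨a, t⟩)
  · exact he.apply_hb.trans he'.apply_hb.symm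
  · have hX : algebraMap (MvPolynomial (GVar n m lam) ℂ) (GF n m lam)
        (MvPolynomial.X (Sum.inr (Sum.inl ⟨a, b⟩))) = γ a (b + 1) := by
      rw [gam, dif_pos ⟨a.isLt, by simp⟩]; rfl
    have hmem : b.val + 1 ∈ Finset.Icc 1 (m a) := by simp [Nat.succ_le_of_lt b.isLt]
    simpa [hX] using (he.apply_gam a (b + 1) (by omega) hmem).trans
      (he'.apply_gam a (b + 1) (by omega) hmem).symm
  · have hX : algebraMap (MvPolynomial (GVar n m lam) ℂ) (GF n m lam)
        (MvPolynomial.X (Sum.inr (Sum.inr ⟨a, t⟩))) = rv n m lam a (t + 1) := by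
      rw [rv, dif_pos ⟨a.isLt, by simp⟩]; rfl
    simpa [hX] using (he.apply_rv a (t + 1)).trans (he'.apply_rv a (t + 1)).symm

theorem IsShift.mul_comm (he : IsShift e d) (he' : IsShift e' d') : e * e' = e' * e :=
  (he.mul he').eq (add_comm d' d ▸ he'.mul he)

theorem IsShift.mul_eq_one (he : IsShift e d) (he' : IsShift e' d') (h : d + d' = 0) :
    e * e' = 1 :=
  (he.mul he').eq (h ▸ isShift_one)

variable {a b i k l : ℕ} {s : ℤ}

theorem IsShift.apply_gam_self (he : IsShift e (Pi.single (a, b) s)) (ha : a ≤ n)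
    (hab : b ∈ Finset.Icc 1 (m a)) : e (γ a b) = γ a b + s * ℏ := by
  simp [he.apply_gam a b ha hab]

theorem IsShift.apply_gam_of_ne (he : IsShift e (Pi.single (a, b) s)) {a' b' : ℕ}
    (ha' : a' ≤ n) (hb' : b' ∈ Finset.Icc 1 (m a')) (hne : a' ≠ a ∨ b' ≠ b) :
    e (γ a' b') = γ a' b' := by
  have : (a', b') ≠ (a, b) := by rintro ⟨⟩; simp at hne
  simp [he.apply_gam a' b' ha' hb', this]

theorem IsShift.apply_cc' (he : IsShift e (Pi.single (i, k) (-1))) (hi : 1 ≤ i) (hin : i ≤ n)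
    (hk : k ∈ Finset.Icc 1 (m i)) :
    e (cc' n m lam i k) =
      RR n m lam i (γ i k) * (∏ l ∈ Finset.Icc 1 (m (i - 1)), (γ i k - γ (i - 1) l - ℏ / 2)) /
        (2 * (γ i k + ℏ / 2) * ∏ l ∈ (Finset.Icc 1 (m i)).erase k, (γ i k ^ 2 - ξ i l ^ 2)) := by
  have hγ : e (γ i k) = γ i k - ℏ := by simp [he.apply_gam_self hin hk, sub_eq_add_neg]
  have hξ : e (ξ i k) = γ i k := by simp [xi, hγ, he.apply_hb]
  have hR : e (RR n m lam i (ξ i k)) = RR n m lam i (γ i k) := by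
    simp only [RR, map_prod, map_sub, map_pow, hξ, he.apply_rv]
  have hN : e (∏ l ∈ Finset.Icc 1 (m (i - 1)), (ξ i k - γ (i - 1) l - ℏ / 2)) =
      ∏ l ∈ Finset.Icc 1 (m (i - 1)), (γ i k - γ (i - 1) l - ℏ / 2) :=
    (map_prod _ _ _).trans <| Finset.prod_congr rfl fun l hl => by
      rw [map_sub, map_sub, map_div₀, hξ, he.apply_hb, map_ofNat,
        he.apply_gam_of_ne (by omega) hl (.inl (by omega))]
  have hQ : e (∏ l ∈ (Finset.Icc 1 (m i)).erase k, (ξ i k ^ 2 - ξ i l ^ 2)) =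
      ∏ l ∈ (Finset.Icc 1 (m i)).erase k, (γ i k ^ 2 - ξ i l ^ 2) :=
    (map_prod _ _ _).trans <| Finset.prod_congr rfl fun l hl => by
      obtain ⟨hlk, hl⟩ := Finset.mem_erase.mp hl
      rw [map_sub, map_pow, map_pow, hξ, xi, map_add, he.apply_hb,
        he.apply_gam_of_ne hin hl (.inr hlk)]
  have hD : e (2 * (γ i k + 3 * ℏ / 2)) = 2 * (γ i k + ℏ / 2) := by
    simp only [map_mul, map_add, map_div₀, map_ofNat, hγ, he.apply_hb]
    ring
  rw [cc', map_div₀, map_mul, map_mul, hR, hN, hD, hQ]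

theorem IsShift.apply_cc'_eq_self (he : IsShift e (Pi.single (i + 1, l) s)) (hin : i ≤ n)
    (hk : k ∈ Finset.Icc 1 (m i)) : e (cc' n m lam i k) = cc' n m lam i k := by
  have hγ : ∀ l ∈ Finset.Icc 1 (m i), e (γ i l) = γ i l := fun l hl =>
    he.apply_gam_of_ne hin hl (.inl (by omega))
  have hξ : ∀ l ∈ Finset.Icc 1 (m i), e (ξ i l) = ξ i l := fun l hl => by
    rw [xi, map_add, hγ l hl, he.apply_hb]
  have hR : e (RR n m lam i (ξ i k)) = RR n m lam i (ξ i k) := by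
    simp only [RR, map_prod, map_sub, map_pow, hξ k hk, he.apply_rv]
  have hN : e (∏ l ∈ Finset.Icc 1 (m (i - 1)), (ξ i k - γ (i - 1) l - ℏ / 2)) =
      ∏ l ∈ Finset.Icc 1 (m (i - 1)), (ξ i k - γ (i - 1) l - ℏ / 2) :=
    (map_prod _ _ _).trans <| Finset.prod_congr rfl fun l hl => by
      rw [map_sub, map_sub, map_div₀, hξ k hk, he.apply_hb, map_ofNat,
        he.apply_gam_of_ne (by omega) hl (.inl (by omega))]
  have hQ : e (∏ l ∈ (Finset.Icc 1 (m i)).erase k, (ξ i k ^ 2 - ξ i l ^ 2)) =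
      ∏ l ∈ (Finset.Icc 1 (m i)).erase k, (ξ i k ^ 2 - ξ i l ^ 2) :=
    (map_prod _ _ _).trans <| Finset.prod_congr rfl fun l hl => by
      rw [map_sub, map_pow, map_pow, hξ k hk, hξ l (Finset.mem_of_mem_erase hl)]
  have hD : e (2 * (γ i k + 3 * ℏ / 2)) = 2 * (γ i k + 3 * ℏ / 2) := by
    simp only [map_mul, map_add, map_div₀, map_ofNat, hγ k hk, he.apply_hb]
  rw [cc', map_div₀, map_mul, map_mul, hR, hN, hD, hQ]

theorem IsShift.mul_apply_cc_succ (he : IsShift e (Pi.single (i, k) (-1))) (hi2 : i + 2 ≤ n)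
    (hk : k ∈ Finset.Icc 1 (m i)) (hl : l ∈ Finset.Icc 1 (m (i + 1))) :
    (γ (i + 1) l + γ i k + ℏ / 2) * e (cc n m lam (i + 1) l) =
      (γ (i + 1) l + γ i k - ℏ / 2) * cc n m lam (i + 1) l := by
  have hδ : e (γ (i + 1) l) = γ (i + 1) l := he.apply_gam_of_ne (by omega) hl (.inl (by omega))
  have hT : e (∏ l' ∈ Finset.Icc 1 (m (i + 1 + 1)),
      (γ (i + 1) l ^ 2 - (γ (i + 1 + 1) l' + ℏ / 2) ^ 2)) =
      ∏ l' ∈ Finset.Icc 1 (m (i + 1 + 1)), (γ (i + 1) l ^ 2 - (γ (i + 1 + 1) l' + ℏ / 2) ^ 2) :=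
    (map_prod _ _ _).trans <| Finset.prod_congr rfl fun l' hl' => by
      rw [map_sub, map_pow, map_pow, map_add, map_div₀, hδ, he.apply_hb, map_ofNat,
        he.apply_gam_of_ne (by omega) hl' (.inl (by omega))]
  have hU : e (∏ l' ∈ (Finset.Icc 1 (m i)).erase k, (γ (i + 1) l + γ i l' + ℏ / 2)) =
      ∏ l' ∈ (Finset.Icc 1 (m i)).erase k, (γ (i + 1) l + γ i l' + ℏ / 2) :=
    (map_prod _ _ _).trans <| Finset.prod_congr rfl fun l' hl' => by
      obtain ⟨hlk, hl'⟩ := Finset.mem_erase.mp hl'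
      rw [map_add, map_add, map_div₀, hδ, he.apply_hb, map_ofNat,
        he.apply_gam_of_ne (by omega) hl' (.inr hlk)]
  have hV : e (γ (i + 1) l + γ i k + ℏ / 2) = γ (i + 1) l + γ i k - ℏ / 2 := by
    simp only [map_add, map_div₀, map_ofNat, hδ, he.apply_hb, he.apply_gam_self (by omega) hk]
    push_cast
    ring
  have hD : e (2 * (γ (i + 1) l - ℏ / 2)) = 2 * (γ (i + 1) l - ℏ / 2) := by
    simp only [map_mul, map_sub, map_div₀, map_ofNat, hδ, he.apply_hb]
  have hQ : e (∏ l' ∈ (Finset.Icc 1 (m (i + 1))).erase l, (γ (i + 1) l ^ 2 - γ (i + 1) l' ^ 2)) =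
      ∏ l' ∈ (Finset.Icc 1 (m (i + 1))).erase l, (γ (i + 1) l ^ 2 - γ (i + 1) l' ^ 2) :=
    (map_prod _ _ _).trans <| Finset.prod_congr rfl fun l' hl' => by
      rw [map_sub, map_pow, map_pow, hδ,
        he.apply_gam_of_ne (by omega) (Finset.mem_of_mem_erase hl') (.inl (by omega))]
  rw [cc, Nat.add_sub_cancel, ← Finset.mul_prod_erase _ _ hk, map_div₀, map_mul, map_mul,
    map_mul, hT, hU, hV, hD, hQ]
  ring

theorem IsShift.mul_apply_cc (he : IsShift e (Pi.single (i + 1, l) (-1))) (hi : 1 ≤ i)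
    (hi1 : i + 1 ≤ n) (hk : k ∈ Finset.Icc 1 (m i)) (hl : l ∈ Finset.Icc 1 (m (i + 1))) :
    (γ i k ^ 2 - (γ (i + 1) l + ℏ / 2) ^ 2) * e (cc n m lam i k) =
      (γ i k ^ 2 - (γ (i + 1) l - ℏ / 2) ^ 2) * cc n m lam i k := by
  have hγ : ∀ l' ∈ Finset.Icc 1 (m i), e (γ i l') = γ i l' := fun l' hl' =>
    he.apply_gam_of_ne (by omega) hl' (.inl (by omega))
  have hP : e (∏ l' ∈ (Finset.Icc 1 (m (i + 1))).erase l,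
      (γ i k ^ 2 - (γ (i + 1) l' + ℏ / 2) ^ 2)) =
      ∏ l' ∈ (Finset.Icc 1 (m (i + 1))).erase l, (γ i k ^ 2 - (γ (i + 1) l' + ℏ / 2) ^ 2) :=
    (map_prod _ _ _).trans <| Finset.prod_congr rfl fun l' hl' => by
      obtain ⟨hll, hl'⟩ := Finset.mem_erase.mp hl'
      rw [map_sub, map_pow, map_pow, map_add, map_div₀, hγ k hk, he.apply_hb, map_ofNat,
        he.apply_gam_of_ne hi1 hl' (.inr hll)]
  have hN : e (∏ l' ∈ Finset.Icc 1 (m (i - 1)), (γ i k + γ (i - 1) l' + ℏ / 2)) =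
      ∏ l' ∈ Finset.Icc 1 (m (i - 1)), (γ i k + γ (i - 1) l' + ℏ / 2) :=
    (map_prod _ _ _).trans <| Finset.prod_congr rfl fun l' hl' => by
      rw [map_add, map_add, map_div₀, hγ k hk, he.apply_hb, map_ofNat,
        he.apply_gam_of_ne (by omega) hl' (.inl (by omega))]
  have hE : e (γ i k ^ 2 - (γ (i + 1) l + ℏ / 2) ^ 2) = γ i k ^ 2 - (γ (i + 1) l - ℏ / 2) ^ 2 := by
    simp only [map_sub, map_pow, map_add, map_div₀, map_ofNat, hγ k hk, he.apply_hb,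
      he.apply_gam_self hi1 hl]
    push_cast
    ring
  have hD : e (2 * (γ i k - ℏ / 2)) = 2 * (γ i k - ℏ / 2) := by
    simp only [map_mul, map_sub, map_div₀, map_ofNat, hγ k hk, he.apply_hb]
  have hQ : e (∏ l' ∈ (Finset.Icc 1 (m i)).erase k, (γ i k ^ 2 - γ i l' ^ 2)) =
      ∏ l' ∈ (Finset.Icc 1 (m i)).erase k, (γ i k ^ 2 - γ i l' ^ 2) :=
    (map_prod _ _ _).trans <| Finset.prod_congr rfl fun l' hl' => by
      rw [map_sub, map_pow, map_pow, hγ k hk, hγ l' (Finset.mem_of_mem_erase hl')]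
  rw [cc, ← Finset.mul_prod_erase _ _ hl, map_div₀, map_mul, map_mul, map_mul, hP, hN,
    hE, hD, hQ]
  ring

theorem hb_ne_zero : ℏ ≠ 0 :=
  (map_ne_zero_iff _ (IsFractionRing.injective (MvPolynomial (GVar n m lam) ℂ) _)).mpr
    (MvPolynomial.X_ne_zero _)

/- Both linear factors of the difference of squares are moved by `-ℏ` under `e`, while `0` is
fixed. -/
theorem IsShift.sq_sub_sq_ne_zero (he : IsShift e (Pi.single (i, k) (-1))) (hi1 : i + 1 ≤ n)
    (hk : k ∈ Finset.Icc 1 (m i)) (hl : l ∈ Finset.Icc 1 (m (i + 1))) :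
    γ i k ^ 2 - (γ (i + 1) l + ℏ / 2) ^ 2 ≠ 0 := by
  have hγ : e (γ i k) = γ i k - ℏ := by simp [he.apply_gam_self (by omega) hk, sub_eq_add_neg]
  have hδ : e (γ (i + 1) l) = γ (i + 1) l := he.apply_gam_of_ne hi1 hl (.inl (by omega))
  rw [sq_sub_sq]
  refine mul_ne_zero (ne_zero_of_map_eq_add e (c := -ℏ) ?_ (neg_ne_zero.mpr hb_ne_zero))
    (ne_zero_of_map_eq_add e (c := -ℏ) ?_ (neg_ne_zero.mpr hb_ne_zero)) <;>
  · simp only [map_add, map_sub, map_div₀, map_ofNat, hγ, hδ, he.apply_hb]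
    ring

theorem IsShift.cc_mul_apply_cc' (he : IsShift e (Pi.single (i, k) (-1))) (hi : 1 ≤ i)
    (hi1 : i + 1 ≤ n) (hk : k ∈ Finset.Icc 1 (m i)) (hl : l ∈ Finset.Icc 1 (m (i + 1))) :
    cc n m lam i k * e (cc' n m lam i k) =
      (γ i k ^ 2 - (γ (i + 1) l + ℏ / 2) ^ 2) / (4 * (γ i k - ℏ / 2) * (γ i k + ℏ / 2)) *
        Sfun n m lam i k l := by
  have hE := he.sq_sub_sq_ne_zero hi1 hk hl
  set E := γ i k ^ 2 - (γ (i + 1) l + ℏ / 2) ^ 2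
  have hN : ∏ l' ∈ Finset.Icc 1 (m (i - 1)), (γ i k ^ 2 - (γ (i - 1) l' + ℏ / 2) ^ 2) =
      (∏ l' ∈ Finset.Icc 1 (m (i - 1)), (γ i k + γ (i - 1) l' + ℏ / 2)) *
        ∏ l' ∈ Finset.Icc 1 (m (i - 1)), (γ i k - γ (i - 1) l' - ℏ / 2) := by
    rw [← Finset.prod_mul_distrib]
    exact Finset.prod_congr rfl fun _ _ => by ring
  rw [he.apply_cc' hi (by omega) hk, cc, Sfun, hN, ← Finset.mul_prod_erase _ _ hl,
    Finset.prod_mul_distrib, mul_left_comm _ E, mul_left_comm _ E, mul_div_mul_left _ _ hE]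
  generalize γ i k - ℏ / 2 = A
  generalize γ i k + ℏ / 2 = B
  ring

end Shift

theorem gklo_xxx_S_components_general (n : ℕ) (m lam : ℕ → ℕ)
    (hm0 : m 0 = 0) (hmn : m n = 0)
    (σm σp : ℕ → ℕ → (GF n m lam ≃ₐ[ℂ] GF n m lam))
    (hσmh : ∀ i k, σm i k (hb n m lam) = hb n m lam)
    (hσph : ∀ i k, σp i k (hb n m lam) = hb n m lam)
    (hσmr : ∀ i k i' t, σm i k (rv n m lam i' t) = rv n m lam i' t)
    (hσpr : ∀ i k i' t, σp i k (rv n m lam i' t) = rv n m lam i' t)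
    (hσmg : ∀ i k i' k', 1 ≤ i' → i' ≤ n - 1 → 1 ≤ k' → k' ≤ m i' →
      σm i k (gam n m lam i' k') =
        if i' = i ∧ k' = k then gam n m lam i k - hb n m lam else gam n m lam i' k')
    (hσpg : ∀ i k i' k', 1 ≤ i' → i' ≤ n - 1 → 1 ≤ k' → k' ≤ m i' →
      σp i k (gam n m lam i' k') =
        if i' = i ∧ k' = k then gam n m lam i k + hb n m lam else gam n m lam i' k')
    (i k l : ℕ)
    (hi : 1 ≤ i) (hi1 : i + 1 ≤ n - 1) (hk : 1 ≤ k) (hk' : k ≤ m i)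
    (hl : 1 ≤ l) (hl' : l ≤ m (i + 1)) :
    (kap n m lam σm i k * kap' n m lam σp i k * kap n m lam σm (i + 1) l =
        Mop n m lam
            ((gam n m lam i k ^ 2 - (gam n m lam (i + 1) l + hb n m lam / 2) ^ 2) /
                (4 * (gam n m lam i k - hb n m lam / 2) * (gam n m lam i k + hb n m lam / 2)) *
              Sfun n m lam i k l) *
          kap n m lam σm (i + 1) l) ∧
      (kap n m lam σm i k * kap n m lam σm (i + 1) l * kap' n m lam σp i k =
        Mop n m lam
            (((gam n m lam i k - hb n m lam / 2) ^ 2 - gam n m lam (i + 1) l ^ 2) /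
                (4 * (gam n m lam i k - hb n m lam / 2) * (gam n m lam i k + hb n m lam / 2)) *
              Sfun n m lam i k l) *
          kap n m lam σm (i + 1) l) ∧
      (kap n m lam σm (i + 1) l * kap n m lam σm i k * kap' n m lam σp i k =
        Mop n m lam
            ((gam n m lam i k ^ 2 - (gam n m lam (i + 1) l - hb n m lam / 2) ^ 2) /
                (4 * (gam n m lam i k - hb n m lam / 2) * (gam n m lam i k + hb n m lam / 2)) *
              Sfun n m lam i k l) *
          kap n m lam σm (i + 1) l) := by
  have hkI : k ∈ Finset.Icc 1 (m i) := Finset.mem_Icc.mpr ⟨hk, hk'⟩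
  have hlI : l ∈ Finset.Icc 1 (m (i + 1)) := Finset.mem_Icc.mpr ⟨hl, hl'⟩
  have hM := isShift_single hm0 hmn (-1) (by push_cast; ring) (hσmh i k) (hσmr i k) (hσmg i k)
  have hM' := isShift_single hm0 hmn (-1) (by push_cast; ring) (hσmh (i + 1) l)
    (hσmr (i + 1) l) (hσmg (i + 1) l)
  have hP := isShift_single hm0 hmn 1 (by push_cast; ring) (hσph i k) (hσpr i k) (hσpg i k)
  have h_inv : σm i k * σp i k = 1 :=
    hM.mul_eq_one hP (by rw [← Pi.single_add, neg_add_cancel, Pi.single_zero])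
  have h_comm : σm i k * σm (i + 1) l = σm (i + 1) l * σm i k := hM.mul_comm hM'
  have hE := hM.sq_sub_sq_ne_zero (by omega) hkI hlI
  have hA := hM.cc_mul_apply_cc' hi (by omega) hkI hlI
  have hB := hM.mul_apply_cc_succ (by omega) hkI hlI
  have hC := hM'.mul_apply_cc hi (by omega) hkI hlI
  have hfix := hM'.apply_cc'_eq_self (k := k) (by omega) hkI
  simp only [kap, kap', Mop, LinearMap.mulLeft_mul_algEquiv_mul, LinearMap.mulLeft_mul_mulLeft_mul]
  refine ⟨?_, ?_, ?_⟩
  · rw [h_inv, one_mul, AlgEquiv.one_apply, hA]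
  · rw [AlgEquiv.mul_apply, hfix, h_comm, mul_assoc (σm (i + 1) l), h_inv, mul_one]
    congr 2
    linear_combination σm i k (cc n m lam (i + 1) l) * hA +
      Sfun n m lam i k l * (gam n m lam i k - gam n m lam (i + 1) l - hb n m lam / 2) /
        (4 * (gam n m lam i k - hb n m lam / 2) * (gam n m lam i k + hb n m lam / 2)) * hB
  · rw [← h_comm, AlgEquiv.mul_apply, hfix, h_comm, mul_assoc (σm (i + 1) l), h_inv, mul_one]
    congr 2
    refine mul_left_cancel₀ hE ?_
    linear_combination cc n m lam (i + 1) l * σm i k (cc' n m lam i k) * hC +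
      (gam n m lam i k ^ 2 - (gam n m lam (i + 1) l - hb n m lam / 2) ^ 2) *
        cc n m lam (i + 1) l * hA

theorem gklo_xxx_S_components (n : ℕ) (hn : 2 ≤ n) (m lam : ℕ → ℕ)
    (hm0 : m 0 = 0) (hmn : m n = 0) (hlam0 : lam 0 = 0) (hlamn : lam n = 0)
    (σm σp : ℕ → ℕ → (GF n m lam ≃ₐ[ℂ] GF n m lam))
    (hσmh : ∀ i k, σm i k (hb n m lam) = hb n m lam)
    (hσph : ∀ i k, σp i k (hb n m lam) = hb n m lam)
    (hσmr : ∀ i k i' t, σm i k (rv n m lam i' t) = rv n m lam i' t)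
    (hσpr : ∀ i k i' t, σp i k (rv n m lam i' t) = rv n m lam i' t)
    (hσmg : ∀ i k i' k', 1 ≤ i' → i' ≤ n - 1 → 1 ≤ k' → k' ≤ m i' →
      σm i k (gam n m lam i' k') =
        if i' = i ∧ k' = k then gam n m lam i k - hb n m lam else gam n m lam i' k')
    (hσpg : ∀ i k i' k', 1 ≤ i' → i' ≤ n - 1 → 1 ≤ k' → k' ≤ m i' →
      σp i k (gam n m lam i' k') =
        if i' = i ∧ k' = k then gam n m lam i k + hb n m lam else gam n m lam i' k')
    (i k l : ℕ)
    (hi : 1 ≤ i) (hi1 : i + 1 ≤ n - 1) (hk : 1 ≤ k) (hk' : k ≤ m i)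
    (hl : 1 ≤ l) (hl' : l ≤ m (i + 1)) :
    (kap n m lam σm i k * kap' n m lam σp i k * kap n m lam σm (i + 1) l =
        Mop n m lam
            ((gam n m lam i k ^ 2 - (gam n m lam (i + 1) l + hb n m lam / 2) ^ 2) /
                (4 * (gam n m lam i k - hb n m lam / 2) * (gam n m lam i k + hb n m lam / 2)) *
              Sfun n m lam i k l) *
          kap n m lam σm (i + 1) l) ∧
      (kap n m lam σm i k * kap n m lam σm (i + 1) l * kap' n m lam σp i k =
        Mop n m lam
            (((gam n m lam i k - hb n m lam / 2) ^ 2 - gam n m lam (i + 1) l ^ 2) /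
                (4 * (gam n m lam i k - hb n m lam / 2) * (gam n m lam i k + hb n m lam / 2)) *
              Sfun n m lam i k l) *
          kap n m lam σm (i + 1) l) ∧
      (kap n m lam σm (i + 1) l * kap n m lam σm i k * kap' n m lam σp i k =
        Mop n m lam
            ((gam n m lam i k ^ 2 - (gam n m lam (i + 1) l - hb n m lam / 2) ^ 2) /
                (4 * (gam n m lam i k - hb n m lam / 2) * (gam n m lam i k + hb n m lam / 2)) *
              Sfun n m lam i k l) *
          kap n m lam σm (i + 1) l) :=
  gklo_xxx_S_components_general n m lam hm0 hmn σm σp hσmh hσph hσmr hσpr hσmg hσpg i k l hi hi1 hk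
    hk' hl hl'
end
end
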